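/- arXiv:1602.02854 — 6 statements merged into one kernel-verified Lean document; each statement's English description precedes it below -/
import Mathlib

section
/- Under the MLR assumption on the family of densities of T, for any parameter value θ and any 0 ≤ p ≤ p' ≤ 1, Pr_θ{P ≤ p | P ≤ p'} ≤ Pr_0{P ≤ p | P ≤ p'} = p/p', where P = F_0(T) if θ > 0 (and P = 1 − F_0(T) if θ < 0) is the one-sided p-value for a true null hypothesis. -/
/-!
Since `F₀` is continuous, the p-value is uniform under `θ = 0`, i.e. `Pr₀{P ≤ q} = q`.
For `A = {P ≤ p} ⊆ B = {P ≤ p'}`, monotonicity of the likelihood ratio `f_θ / f₀` in `P` gives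
`f₀ y f_θ x ≤ f_θ y f₀ x` for `x ∈ A`, `y ∈ B \ A`; integrating over `A × (B \ A)` and adding
`Pr₀(A) Pr_θ(A)` to both sides yields `Pr₀(B) Pr_θ(A) ≤ Pr₀(A) Pr_θ(B)`.
-/

open MeasureTheory Set Filter Topology ProbabilityTheory
open scoped ENNReal

section
variable (ν : Measure ℝ) [IsProbabilityMeasure ν]

/-- For `q < 1` the set `{cdf ν ≤ q}` is a closed, bounded lower set, hence `Iic a` with
`a = sSup`, and `cdf ν a = q` by the intermediate value theorem. -/
lemma measure_cdf_le_eq_ofReal (hcont : Continuous (cdf ν)) {q : ℝ} (hq0 : 0 ≤ q) (hq1 : q ≤ 1) :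
    ν {t | cdf ν t ≤ q} = ENNReal.ofReal q := by
  set S := {t | cdf ν t ≤ q}
  obtain hq1 | rfl := hq1.lt_or_eq
  swap
  · simp [S, cdf_le_one]
  obtain hS | hS := S.eq_empty_or_nonempty
  · obtain rfl : q = 0 := by
      refine le_antisymm (not_lt.1 fun hq => ?_) hq0
      obtain ⟨t, ht⟩ := ((tendsto_cdf_atBot ν).eventually (eventually_lt_nhds hq)).exists
      exact hS.subset ht.le
    simp [hS]
  obtain ⟨c, hc⟩ := ((tendsto_cdf_atTop ν).eventually (eventually_gt_nhds hq1)).exists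
  have hcS : c ∈ upperBounds S := fun t ht => ((monotone_cdf ν).reflect_lt (ht.trans_lt hc)).le
  have haS : sSup S ∈ S := (isClosed_le hcont continuous_const).csSup_mem hS ⟨c, hcS⟩
  have hSa : S = Iic (sSup S) :=
    Subset.antisymm (fun t ht => le_csSup ⟨c, hcS⟩ ht) fun t ht => (monotone_cdf ν ht).trans haS
  obtain ⟨b, -, hb⟩ := intermediate_value_Icc (csSup_le hS hcS) hcont.continuousOn ⟨haS, hc.le⟩
  have hFa : cdf ν (sSup S) = q :=
    le_antisymm haS (hb ▸ monotone_cdf ν (le_csSup ⟨c, hcS⟩ (hb.le : b ∈ S)))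
  rw [hSa, ← ofReal_cdf, hFa]

lemma measure_cdf_lt_eq_ofReal (hcont : Continuous (cdf ν)) {r : ℝ} (hr0 : 0 ≤ r) (hr1 : r ≤ 1) :
    ν {t | cdf ν t < r} = ENNReal.ofReal r := by
  refine le_antisymm ?_ (le_of_forall_lt_imp_le_of_dense fun c hc => ?_)
  · rw [← measure_cdf_le_eq_ofReal ν hcont hr0 hr1]
    exact measure_mono fun t (ht : cdf ν t < r) => ht.le
  · have hcr : c.toReal < r := ENNReal.toReal_lt_of_lt_ofReal hc
    rw [← ENNReal.ofReal_toReal (hc.trans ENNReal.ofReal_lt_top).ne,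
      ← measure_cdf_le_eq_ofReal ν hcont ENNReal.toReal_nonneg (hcr.le.trans hr1)]
    exact measure_mono fun t ht => lt_of_le_of_lt ht hcr

lemma measure_one_sub_cdf_le_eq_ofReal (hcont : Continuous (cdf ν)) {q : ℝ} (hq0 : 0 ≤ q)
    (hq1 : q ≤ 1) : ν {t | 1 - cdf ν t ≤ q} = ENNReal.ofReal q := by
  have hcompl : {t | 1 - cdf ν t ≤ q} = {t | cdf ν t < 1 - q}ᶜ := by
    ext t
    simp only [mem_ofPred_eq, mem_compl_iff, not_lt]
    constructor <;> intro h <;> linarith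
  rw [hcompl, prob_compl_eq_one_sub (measurableSet_lt hcont.measurable measurable_const),
    measure_cdf_lt_eq_ofReal ν hcont (by linarith) (by linarith), ← ENNReal.ofReal_one,
    ← ENNReal.ofReal_sub _ (by linarith), sub_sub_cancel]
end

lemma lintegral_mul_le_of_cross_le {α : Type*} [MeasurableSpace α] {m : Measure α}
    {u v : α → ℝ≥0∞} {A B : Set α} (hA : MeasurableSet A) (hB : MeasurableSet B) (hAB : A ⊆ B)
    (hu : ∀ x, u x ≠ ⊤) (hvA : ∫⁻ x in A, v x ∂m ≠ ⊤)
    (h : ∀ x ∈ A, ∀ y ∈ B \ A, v y * u x ≤ u y * v x) :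
    (∫⁻ y in B, v y ∂m) * ∫⁻ x in A, u x ∂m ≤ (∫⁻ x in A, v x ∂m) * ∫⁻ y in B, u y ∂m := by
  have hsplit (w : α → ℝ≥0∞) :
      ∫⁻ y in B, w y ∂m = (∫⁻ y in A, w y ∂m) + ∫⁻ y in B \ A, w y ∂m := by
    rw [← lintegral_union (hB.diff hA) disjoint_sdiff_self_right, union_sdiff_cancel hAB]
  rw [hsplit v, hsplit u, add_mul, mul_add]
  refine add_le_add le_rfl ?_
  calc (∫⁻ y in B \ A, v y ∂m) * ∫⁻ x in A, u x ∂m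
      ≤ ∫⁻ y in B \ A, v y * ∫⁻ x in A, u x ∂m ∂m := lintegral_mul_const_le _ _
    _ ≤ ∫⁻ y in B \ A, u y * ∫⁻ x in A, v x ∂m ∂m := by
        refine setLIntegral_mono' (hB.diff hA) fun y hy => ?_
        calc v y * ∫⁻ x in A, u x ∂m
            ≤ ∫⁻ x in A, v y * u x ∂m := lintegral_const_mul_le _ _
          _ ≤ ∫⁻ x in A, u y * v x ∂m := setLIntegral_mono' hA fun x hx => h x hx y hy
          _ = u y * ∫⁻ x in A, v x ∂m := lintegral_const_mul' _ _ (hu y)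
    _ = (∫⁻ x in A, v x ∂m) * ∫⁻ y in B \ A, u y ∂m := by
        rw [lintegral_mul_const' _ _ hvA, mul_comm]

lemma measure_mul_le_of_likelihoodRatio_le {α : Type*} [MeasurableSpace α] {m ν₀ ν₁ : Measure α}
    {f₀ f₁ : α → ℝ} (h₀ : ν₀ = m.withDensity fun x => ENNReal.ofReal (f₀ x))
    (h₁ : ν₁ = m.withDensity fun x => ENNReal.ofReal (f₁ x)) (hf₀ : ∀ x, 0 < f₀ x)
    {A B : Set α} (hA : MeasurableSet A) (hB : MeasurableSet B) (hAB : A ⊆ B) (hν₀A : ν₀ A ≠ ⊤)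
    (hratio : ∀ x ∈ A, ∀ y ∈ B \ A, f₁ x / f₀ x ≤ f₁ y / f₀ y) :
    ν₀ B * ν₁ A ≤ ν₀ A * ν₁ B := by
  subst h₀ h₁
  rw [withDensity_apply _ hA] at hν₀A
  simp only [withDensity_apply _ hA, withDensity_apply _ hB]
  refine lintegral_mul_le_of_cross_le hA hB hAB (fun _ => ENNReal.ofReal_ne_top) hν₀A
    fun x hx y hy => ?_
  have hcross := (div_le_div_iff₀ (hf₀ x) (hf₀ y)).1 (hratio x hx y hy)
  rw [← ENNReal.ofReal_mul (hf₀ y).le, mul_comm (ENNReal.ofReal (f₁ y)),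
    ← ENNReal.ofReal_mul (hf₀ x).le]
  exact ENNReal.ofReal_le_ofReal (by linarith)

lemma ofReal_mul_measure_le_of_likelihoodRatio_le {α : Type*} [MeasurableSpace α]
    {m ν₀ ν₁ : Measure α} {f₀ f₁ : α → ℝ}
    (h₀ : ν₀ = m.withDensity fun x => ENNReal.ofReal (f₀ x))
    (h₁ : ν₁ = m.withDensity fun x => ENNReal.ofReal (f₁ x)) (hf₀ : ∀ x, 0 < f₀ x)
    {P : α → ℝ} (hP : Measurable P) (hratio : ∀ x y, P x < P y → f₁ x / f₀ x ≤ f₁ y / f₀ y)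
    {p p' : ℝ} (hpp' : p ≤ p') (hνp : ν₀ {t | P t ≤ p} = ENNReal.ofReal p)
    (hνp' : ν₀ {t | P t ≤ p'} = ENNReal.ofReal p') :
    ENNReal.ofReal p' * ν₁ {t | P t ≤ p} ≤ ENNReal.ofReal p * ν₁ {t | P t ≤ p'} := by
  rw [← hνp, ← hνp']
  refine measure_mul_le_of_likelihoodRatio_le h₀ h₁ hf₀ (measurableSet_le hP measurable_const)
    (measurableSet_le hP measurable_const) (fun t ht => le_trans ht hpp')
    (hνp ▸ ENNReal.ofReal_ne_top) fun x hx y hy => hratio x y ?_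
  exact lt_of_le_of_lt hx (not_le.1 hy.2)

/-- The conditional bound `Pr_θ{P ≤ p | P ≤ p'} ≤ p / p'` is stated cross-multiplied, which
stays meaningful when `Pr_θ{P ≤ p'} = 0`. -/
theorem mlr_pvalue_conditional_dominance_general
    (μ : ℝ → Measure ℝ) (hprob : ∀ θ, IsProbabilityMeasure (μ θ))
    (f : ℝ → ℝ → ℝ) (hfpos : ∀ θ x, 0 < f θ x)
    (hdens : ∀ θ, μ θ = volume.withDensity (fun x => ENNReal.ofReal (f θ x)))
    (F : ℝ → ℝ → ℝ)
    (hF : ∀ θ x, F θ x = (μ θ (Iic x)).toReal)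
    (hcont : Continuous (F 0))
    (MLR : ∀ θ₀ θ₁ x₀ x₁, θ₀ < θ₁ → x₀ < x₁ →
      f θ₁ x₀ / f θ₀ x₀ ≤ f θ₁ x₁ / f θ₀ x₁)
    (θ p p' : ℝ) (hp0 : 0 ≤ p) (hpp' : p ≤ p') (hp'1 : p' ≤ 1) :
    (0 < θ →
      ENNReal.ofReal p' * μ θ {t | F 0 t ≤ p} ≤
        ENNReal.ofReal p * μ θ {t | F 0 t ≤ p'}) ∧
    (θ < 0 →
      ENNReal.ofReal p' * μ θ {t | 1 - F 0 t ≤ p} ≤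
        ENNReal.ofReal p * μ θ {t | 1 - F 0 t ≤ p'}) ∧
    μ 0 {t | F 0 t ≤ p} = ENNReal.ofReal p := by
  have hp1 : p ≤ 1 := hpp'.trans hp'1
  have hp'0 : 0 ≤ p' := hp0.trans hpp'
  have hF0 : F 0 = cdf (μ 0) := funext fun x => by rw [hF, cdf_eq_real, measureReal_def]
  rw [hF0] at hcont ⊢
  refine ⟨fun hθ => ?_, fun hθ => ?_, measure_cdf_le_eq_ofReal (μ 0) hcont hp0 hp1⟩
  · exact ofReal_mul_measure_le_of_likelihoodRatio_le (hdens 0) (hdens θ) (hfpos 0)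
      hcont.measurable (fun x y hxy => MLR 0 θ x y hθ ((monotone_cdf _).reflect_lt hxy)) hpp'
      (measure_cdf_le_eq_ofReal (μ 0) hcont hp0 hp1)
      (measure_cdf_le_eq_ofReal (μ 0) hcont hp'0 hp'1)
  · refine ofReal_mul_measure_le_of_likelihoodRatio_le (P := fun t => 1 - cdf (μ 0) t) (hdens 0)
      (hdens θ) (hfpos 0) (continuous_const.sub hcont).measurable (fun x y hxy => ?_) hpp'
      (measure_one_sub_cdf_le_eq_ofReal (μ 0) hcont hp0 hp1)
      (measure_one_sub_cdf_le_eq_ofReal (μ 0) hcont hp'0 hp'1)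
    have hyx : y < x := (monotone_cdf _).reflect_lt (by linarith only [hxy])
    simpa only [inv_div] using inv_anti₀ (div_pos (hfpos 0 y) (hfpos θ y)) (MLR θ 0 y x hθ hyx)

/-- Under the MLR assumption, for any θ and 0 ≤ p ≤ p' ≤ 1, the
conditional probability Pr_θ{P ≤ p | P ≤ p'} ≤ Pr_0{P ≤ p | P ≤ p'} = p/p',
where P = F₀(T) if θ > 0 and P = 1 - F₀(T) if θ < 0 is the one-sided p-value.
The conditional inequality Pr{P ≤ p | P ≤ p'} ≤ p/p' is stated in the
equivalent product form p' · Pr_θ{P ≤ p} ≤ p · Pr_θ{P ≤ p'} (valid since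
{P ≤ p} ⊆ {P ≤ p'}), and at θ = 0 we have Pr_0{P ≤ p} = p exactly. -/
theorem mlr_pvalue_conditional_dominance
    (μ : ℝ → Measure ℝ) (hprob : ∀ θ, IsProbabilityMeasure (μ θ))
    (f : ℝ → ℝ → ℝ) (hfpos : ∀ θ x, 0 < f θ x)
    (hdens : ∀ θ, μ θ = volume.withDensity (fun x => ENNReal.ofReal (f θ x)))
    (F : ℝ → ℝ → ℝ)
    (hF : ∀ θ x, F θ x = (μ θ (Iic x)).toReal)
    (hmono : ∀ θ θ' x, θ ≤ θ' → F θ' x ≤ F θ x)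
    (hcont : Continuous (F 0))
    (MLR : ∀ θ₀ θ₁ x₀ x₁, θ₀ < θ₁ → x₀ < x₁ →
      f θ₁ x₀ / f θ₀ x₀ ≤ f θ₁ x₁ / f θ₀ x₁)
    (θ p p' : ℝ) (hp0 : 0 ≤ p) (hpp' : p ≤ p') (hp'1 : p' ≤ 1) :
    (0 < θ →
      ENNReal.ofReal p' * μ θ {t | F 0 t ≤ p} ≤
        ENNReal.ofReal p * μ θ {t | F 0 t ≤ p'}) ∧
    (θ < 0 →
      ENNReal.ofReal p' * μ θ {t | 1 - F 0 t ≤ p} ≤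
        ENNReal.ofReal p * μ θ {t | 1 - F 0 t ≤ p'}) ∧
    μ 0 {t | F 0 t ≤ p} = ENNReal.ofReal p :=
  mlr_pvalue_conditional_dominance_general μ hprob f hfpos hdens F hF hcont MLR θ p p' hp0 hpp' hp'1
end

section
/- The two-stage procedure (Procedure 1: first reject all hypotheses among H₁,...,H_{2n} with p-value ≤ α/n; if r hypotheses are rejected at stage 1 with r < n, then reject remaining hypotheses with p-value ≤ α/(n−r)) satisfies FWER(θ) ≤ α/(1 − α/n) for every parameter vector θ, under assumptions A.1, A.2, A.3. -/
open MeasureTheory ProbabilityTheory Finset Filter Topology Function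
open scoped Classical

/-!
Put `β = 1 - α/n`. The false null `H_{n+j}` is rejected at stage 1 exactly when `P_j ≥ β`, so if
no true null is rejected at stage 1 the stage-2 threshold is `α/M` with `M = #{j | P_j < β}`, while
a true null rejected at stage 1 has `P_j ≤ α/n ≤ α/M`. Either way an error forces `P_i ≤ α/M` for
some `i`. Split `Ω` into the cells on which the set `{j | P_j < β}` is fixed, of size `m` say. On
such a cell, independence and A.2 (with `p' ↑ β`) bound the probability of `P_i ≤ α/m` by
`(α/m)/β` times the probability of the cell, for each of the `m` indices `i` of the set; so the
cell contributes at most `α/β` times its probability, and the cells sum to at most `α/β`.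
-/

lemma div_natCast_le_self {α : ℝ} (hα : 0 ≤ α) (m : ℕ) : α / m ≤ α := by
  rcases m.eq_zero_or_pos with rfl | hm
  · simpa using hα
  · exact div_le_self hα (by exact_mod_cast hm)

lemma natCast_mul_div_natCast_le {α : ℝ} (hα : 0 ≤ α) (m : ℕ) : m * (α / m) ≤ α := by
  rcases m.eq_zero_or_pos with rfl | hm
  · simpa using hα
  · rw [mul_div_cancel₀ _ (by positivity)]

lemma card_filter_le_add_card_filter_lt_one_sub {ι : Type*} [Fintype ι] (x : ι → ℝ)
    (y : ι ⊕ ι → ℝ) (hl : ∀ j, y (.inl j) = x j) (hr : ∀ j, y (.inr j) = 1 - x j) {t : ℝ}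
    (ht : ∀ j, t < x j) :
    #{k | y k ≤ t} + #{j | x j < 1 - t} = Fintype.card ι := by
  have hinr : ∀ j, y (.inr j) ≤ t ↔ ¬ x j < 1 - t := fun j => by
    rw [hr, not_lt, sub_le_comm]
  rw [card_filter, Fintype.sum_sum_type, ← card_filter, ← card_filter,
    filter_false_of_mem fun j _ => by rw [hl]; exact not_le.2 (ht j), card_empty, zero_add,
    filter_congr fun j _ => hinr j, add_comm, card_filter_add_card_filter_not, card_univ]

lemma measurableSet_decide_lt_eq (β : ℝ) (t : Bool) :
    MeasurableSet {x : ℝ | decide (x < β) = t} := by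
  cases t
  · simpa [Set.Ici] using measurableSet_Ici (a := β)
  · simpa [Set.Iio] using measurableSet_Iio (a := β)

lemma exists_le_div_card_lt_of_two_stage_reject {n : ℕ} {α : ℝ} (hα : 0 ≤ α)
    (hαβ : α < 1 - α / n) (x : Fin n → ℝ) (y : Fin n ⊕ Fin n → ℝ)
    (hl : ∀ j, y (.inl j) = x j) (hr : ∀ j, y (.inr j) = 1 - x j) {i : Fin n}
    (hi : x i ≤ α / n ∨ x i ≤ α / ((n - #{k | y k ≤ α / n} : ℕ) : ℝ)) :
    ∃ j, x j ≤ α / #{j | x j < 1 - α / n} := by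
  by_cases hstage1 : ∃ j, x j ≤ α / n
  · obtain ⟨j, hj⟩ := hstage1
    have hpos : 0 < #{j | x j < 1 - α / n} :=
      card_pos.2 ⟨j, by
        simp only [mem_filter, mem_univ, true_and]
        linarith [div_natCast_le_self hα n]⟩
    have hle : #{j | x j < 1 - α / n} ≤ n := (card_filter_le _ _).trans (card_fin n).le
    exact ⟨j, hj.trans (div_le_div_of_nonneg_left hα (by exact_mod_cast hpos)
      (by exact_mod_cast hle))⟩
  · simp only [not_exists, not_le] at hstage1
    have hcount := card_filter_le_add_card_filter_lt_one_sub x y hl hr hstage1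
    rw [Fintype.card_fin] at hcount
    rcases hi with hi | hi
    · exact absurd hi (not_le.2 (hstage1 i))
    · exact ⟨i, by rwa [show n - #{k | y k ≤ α / n} = #{j | x j < 1 - α / n} by omega] at hi⟩

section

variable {Ω ι : Type*} {P : ι → Ω → ℝ}

def belowCell (P : ι → Ω → ℝ) (β : ℝ) (b : ι → Bool) : Set Ω :=
  ⋂ j, P j ⁻¹' {x | decide (x < β) = b j}

lemma mem_belowCell {β : ℝ} {b : ι → Bool} {ω : Ω} :
    ω ∈ belowCell P β b ↔ ∀ j, decide (P j ω < β) = b j :=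
  Set.mem_iInter

variable [MeasurableSpace Ω] {μ : Measure Ω}

theorem ofReal_mul_measure_le_le_ofReal_mul_measure_lt [IsFiniteMeasure μ] {X : Ω → ℝ}
    (hX : ∀ p p' : ℝ, 0 ≤ p → p ≤ p' → p' ≤ 1 →
      ENNReal.ofReal p' * μ {ω | X ω ≤ p} ≤ ENNReal.ofReal p * μ {ω | X ω ≤ p'})
    {c β : ℝ} (hc : 0 ≤ c) (hcβ : c < β) (hβ : β ≤ 1) :
    ENNReal.ofReal β * μ {ω | X ω ≤ c} ≤ ENNReal.ofReal c * μ {ω | X ω < β} := by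
  have hlim : Tendsto (fun t => ENNReal.ofReal t * μ {ω | X ω ≤ c}) (𝓝[<] β)
      (𝓝 (ENNReal.ofReal β * μ {ω | X ω ≤ c})) :=
    ENNReal.Tendsto.mul_const
      ((ENNReal.continuous_ofReal.tendsto β).mono_left nhdsWithin_le_nhds)
      (Or.inr (measure_ne_top _ _))
  refine le_of_tendsto hlim ?_
  filter_upwards [Ico_mem_nhdsLT hcβ] with t ⟨hct, htβ⟩
  calc ENNReal.ofReal t * μ {ω | X ω ≤ c} ≤ ENNReal.ofReal c * μ {ω | X ω ≤ t} :=
        hX c t hc hct (htβ.le.trans hβ)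
    _ ≤ ENNReal.ofReal c * μ {ω | X ω < β} := by gcongr

variable [Fintype ι]

theorem ProbabilityTheory.iIndepFun.measure_iInter_preimage_eq_mul_prod_erase {E : Type*}
    [MeasurableSpace E] {X : ι → Ω → E} (hX : iIndepFun X μ) {s : ι → Set E}
    (hs : ∀ j, MeasurableSet (s j)) (i : ι) :
    μ (⋂ j, X j ⁻¹' s j) = μ (X i ⁻¹' s i) * ∏ j ∈ univ.erase i, μ (X j ⁻¹' s j) := by
  rw [mul_prod_erase univ (fun j => μ (X j ⁻¹' s j)) (mem_univ i)]
  simpa using hX.measure_inter_preimage_eq_mul univ (sets := s) fun j _ => hs j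

lemma measurableSet_belowCell (hP : ∀ j, Measurable (P j)) (β : ℝ) (b : ι → Bool) :
    MeasurableSet (belowCell P β b) :=
  .iInter fun j => hP j (measurableSet_decide_lt_eq β (b j))

lemma sum_measure_belowCell_le_one [IsProbabilityMeasure μ] (hP : ∀ j, Measurable (P j))
    (β : ℝ) : ∑ b, μ (belowCell P β b) ≤ 1 := by
  rw [← measure_biUnion_finset (fun b _ b' _ hbb' => ?_)
    fun b _ => measurableSet_belowCell hP β b]
  · exact prob_le_one
  · refine Set.disjoint_left.2 fun ω hω hω' => hbb' (funext fun j => ?_)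
    rw [← mem_belowCell.1 hω j, mem_belowCell.1 hω' j]

theorem ofReal_mul_measure_belowCell_inter_le [IsFiniteMeasure μ] (hP : iIndepFun P μ)
    (hratio : ∀ i, ∀ p p' : ℝ, 0 ≤ p → p ≤ p' → p' ≤ 1 →
      ENNReal.ofReal p' * μ {ω | P i ω ≤ p} ≤ ENNReal.ofReal p * μ {ω | P i ω ≤ p'})
    {c β : ℝ} (hc : 0 ≤ c) (hcβ : c < β) (hβ : β ≤ 1) {b : ι → Bool} {i : ι} (hbi : b i) :
    ENNReal.ofReal β * μ (belowCell P β b ∩ {ω | P i ω ≤ c}) ≤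
      ENNReal.ofReal c * μ (belowCell P β b) := by
  set s : ι → Set ℝ := fun j => {x | decide (x < β) = b j}
  have hs : ∀ j, MeasurableSet (s j) := fun j => measurableSet_decide_lt_eq β (b j)
  have hs' : ∀ j, MeasurableSet (update s i (Set.Iic c) j) := by
    intro j
    rcases eq_or_ne j i with rfl | hj
    · simp [measurableSet_Iic]
    · simpa [hj] using hs j
  have hinter :
      belowCell P β b ∩ {ω | P i ω ≤ c} = ⋂ j, P j ⁻¹' update s i (Set.Iic c) j := by
    ext ω
    simp only [Set.mem_inter_iff, mem_belowCell, Set.mem_ofPred_eq, Set.mem_iInter,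
      Set.mem_preimage]
    constructor
    · rintro ⟨hcell, hle⟩ j
      rcases eq_or_ne j i with rfl | hj
      · simpa using hle
      · rw [update_of_ne hj]; exact hcell j
    · intro h
      have hle : P i ω ≤ c := by simpa using h i
      refine ⟨fun j => ?_, hle⟩
      rcases eq_or_ne j i with rfl | hj
      · simpa [hbi] using hle.trans_lt hcβ
      · have hj' := h j
        rwa [update_of_ne hj] at hj'
  have hrest : ∏ j ∈ univ.erase i, μ (P j ⁻¹' update s i (Set.Iic c) j) =
      ∏ j ∈ univ.erase i, μ (P j ⁻¹' s j) :=
    prod_congr rfl fun j hj => by rw [update_of_ne (ne_of_mem_erase hj)]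
  have hsi : P i ⁻¹' s i = {ω | P i ω < β} := by ext; simp [s, hbi]
  rw [hinter, hP.measure_iInter_preimage_eq_mul_prod_erase hs' i, belowCell,
    hP.measure_iInter_preimage_eq_mul_prod_erase hs i, update_self, hrest, hsi, ← mul_assoc,
    ← mul_assoc]
  exact mul_le_mul_left (ofReal_mul_measure_le_le_ofReal_mul_measure_lt (hratio i) hc hcβ hβ) _

theorem measure_exists_le_div_card_lt_le [IsProbabilityMeasure μ] (hP : iIndepFun P μ)
    (hmeas : ∀ j, Measurable (P j))
    (hratio : ∀ i, ∀ p p' : ℝ, 0 ≤ p → p ≤ p' → p' ≤ 1 →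
      ENNReal.ofReal p' * μ {ω | P i ω ≤ p} ≤ ENNReal.ofReal p * μ {ω | P i ω ≤ p'})
    {α β : ℝ} (hα : 0 ≤ α) (hαβ : α < β) (hβ : β ≤ 1) :
    μ {ω | ∃ i, P i ω ≤ α / #{j | P j ω < β}} ≤ ENNReal.ofReal (α / β) := by
  set c : (ι → Bool) → ℝ := fun b => α / #{j | b j}
  have hc : ∀ b, 0 ≤ c b ∧ c b < β := fun b =>
    ⟨by positivity, (div_natCast_le_self hα _).trans_lt hαβ⟩
  have hsub : {ω | ∃ i, P i ω ≤ α / #{j | P j ω < β}} ⊆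
      ⋃ i, ⋃ b ∈ ({b | b i} : Finset (ι → Bool)), belowCell P β b ∩ {ω | P i ω ≤ c b} := by
    rintro ω ⟨i, hi⟩
    set b : ι → Bool := fun j => decide (P j ω < β)
    have hcard : #{j | P j ω < β} = #{j | b j} := by simp [b]
    rw [hcard] at hi
    simp only [Set.mem_iUnion]
    exact ⟨i, b, by simpa [b] using hi.trans_lt (hc b).2, mem_belowCell.2 fun j => rfl, hi⟩
  have hβ0 : 0 < β := hα.trans_lt hαβ
  rw [ENNReal.ofReal_div_of_pos hβ0, ENNReal.le_div_iff_mul_le (.inl (by simpa using hβ0))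
    (.inl ENNReal.ofReal_ne_top), mul_comm]
  calc ENNReal.ofReal β * μ {ω | ∃ i, P i ω ≤ α / #{j | P j ω < β}}
      ≤ ENNReal.ofReal β * ∑ i, ∑ b ∈ ({b | b i} : Finset (ι → Bool)),
          μ (belowCell P β b ∩ {ω | P i ω ≤ c b}) := by
        gcongr
        exact (measure_mono hsub).trans <| (measure_iUnion_fintype_le _ _).trans <|
          sum_le_sum fun i _ => measure_biUnion_finset_le _ _
    _ ≤ ∑ i, ∑ b ∈ ({b | b i} : Finset (ι → Bool)),
          ENNReal.ofReal (c b) * μ (belowCell P β b) := by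
        simp only [mul_sum]
        refine sum_le_sum fun i _ => sum_le_sum fun b hb => ?_
        exact ofReal_mul_measure_belowCell_inter_le hP hratio (hc b).1 (hc b).2 hβ
          (by simpa using hb)
    _ = ∑ b, ∑ i ∈ ({i | b i} : Finset ι), ENNReal.ofReal (c b) * μ (belowCell P β b) :=
        sum_comm' (by simp)
    _ = ∑ b, ENNReal.ofReal (#{i | b i} * c b) * μ (belowCell P β b) := by
        simp only [sum_const, nsmul_eq_mul, ENNReal.ofReal_mul (Nat.cast_nonneg _),
          ENNReal.ofReal_natCast, mul_assoc]
    _ ≤ ∑ b, ENNReal.ofReal α * μ (belowCell P β b) := by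
        gcongr with b
        exact natCast_mul_div_natCast_le hα _
    _ ≤ ENNReal.ofReal α := by
        rw [← mul_sum]
        exact mul_le_of_le_one_right' (sum_measure_belowCell_le_one hmeas β)

end

theorem two_stage_procedure_fwer_bound_general
    {Ω : Type*} [MeasurableSpace Ω] (μ : Measure Ω) [IsProbabilityMeasure μ]
    (n : ℕ) (α : ℝ) (hα : 0 < α) (hα1 : α < 1)
    (P : Fin n → Ω → ℝ)
    (hmeas : ∀ i, Measurable (P i))
    -- A.2: Pr{Pᵢ ≤ p | Pᵢ ≤ p'} ≤ p/p', stated in product form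
    (hA2 : ∀ i, ∀ p p' : ℝ, 0 ≤ p → p ≤ p' → p' ≤ 1 →
      ENNReal.ofReal p' * μ {ω | P i ω ≤ p} ≤
        ENNReal.ofReal p * μ {ω | P i ω ≤ p'})
    -- A.3: the statistics (hence the pairs of p-values) are mutually independent
    (hA3 : ProbabilityTheory.iIndepFun P μ)
    -- the full family of 2n p-values: true nulls inl, false nulls inr
    (pval : (Fin n ⊕ Fin n) → Ω → ℝ)
    (hpvalT : ∀ i, pval (Sum.inl i) = P i)
    (hpvalF : ∀ i ω, pval (Sum.inr i) ω = 1 - P i ω)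
    -- r = number of rejections at stage 1
    (r : Ω → ℕ)
    (hr : ∀ ω, r ω = (Finset.univ.filter
      (fun j : Fin n ⊕ Fin n => pval j ω ≤ α / (n : ℝ))).card) :
    μ {ω | ∃ i : Fin n, P i ω ≤ α / (n : ℝ) ∨
        (r ω < n ∧ P i ω ≤ α / ((n - r ω : ℕ) : ℝ))} ≤
      ENNReal.ofReal (α / (1 - α / (n : ℝ))) := by
  set β := 1 - α / n
  have hαn : α / n ≤ α := div_natCast_le_self hα.le n
  rcases le_or_gt β α with hβα | hαβ
  · exact prob_le_one.trans (ENNReal.one_le_ofReal.2 ((one_le_div (by linarith)).2 hβα))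
  calc μ _ ≤ μ {ω | ∃ i, P i ω ≤ α / #{j | P j ω < β}} := measure_mono ?_
    _ ≤ _ := measure_exists_le_div_card_lt_le hA3 hmeas hA2 hα.le hαβ
      (by linarith [div_nonneg hα.le n.cast_nonneg])
  rintro ω ⟨i, hi⟩
  rw [hr ω] at hi
  exact exists_le_div_card_lt_of_two_stage_reject hα.le hαβ (fun j => P j ω) (fun k => pval k ω)
    (fun j => congrFun (hpvalT j) ω) (fun j => hpvalF j ω) (hi.imp_right And.right)

/-- The two-stage Procedure 1 (stage 1: reject hypotheses among the
2n one-sided hypotheses whose p-value is ≤ α/n; if r < n are rejected, stage 2: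
reject remaining hypotheses with p-value ≤ α/(n−r)) has
FWER(θ) ≤ α/(1 − α/n) under assumptions A.1, A.2, A.3.  The n true nulls have
p-values P i, the n false nulls have p-values 1 − P i. -/
theorem two_stage_procedure_fwer_bound
    {Ω : Type*} [MeasurableSpace Ω] (μ : Measure Ω) [IsProbabilityMeasure μ]
    (n : ℕ) (hn : 1 ≤ n) (α : ℝ) (hα : 0 < α) (hα1 : α < 1)
    (θ : Fin n → ℝ) (P : Fin n → Ω → ℝ)
    (hmeas : ∀ i, Measurable (P i))
    -- A.1: true null p-values are stochastically larger than U(0,1) ...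
    (hA1 : ∀ i, ∀ p : ℝ, 0 ≤ p → p ≤ 1 →
      μ {ω | P i ω ≤ p} ≤ ENNReal.ofReal p)
    -- ... with equality (exact uniformity) when θᵢ = 0
    (hA1eq : ∀ i, θ i = 0 → ∀ p : ℝ, 0 ≤ p → p ≤ 1 →
      μ {ω | P i ω ≤ p} = ENNReal.ofReal p)
    -- A.2: Pr{Pᵢ ≤ p | Pᵢ ≤ p'} ≤ p/p', stated in product form
    (hA2 : ∀ i, ∀ p p' : ℝ, 0 ≤ p → p ≤ p' → p' ≤ 1 →
      ENNReal.ofReal p' * μ {ω | P i ω ≤ p} ≤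
        ENNReal.ofReal p * μ {ω | P i ω ≤ p'})
    -- A.3: the statistics (hence the pairs of p-values) are mutually independent
    (hA3 : ProbabilityTheory.iIndepFun P μ)
    -- the full family of 2n p-values: true nulls inl, false nulls inr
    (pval : (Fin n ⊕ Fin n) → Ω → ℝ)
    (hpvalT : ∀ i, pval (Sum.inl i) = P i)
    (hpvalF : ∀ i ω, pval (Sum.inr i) ω = 1 - P i ω)
    -- r = number of rejections at stage 1
    (r : Ω → ℕ)
    (hr : ∀ ω, r ω = (Finset.univ.filter
      (fun j : Fin n ⊕ Fin n => pval j ω ≤ α / (n : ℝ))).card) :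
    μ {ω | ∃ i : Fin n, P i ω ≤ α / (n : ℝ) ∨
        (r ω < n ∧ P i ω ≤ α / ((n - r ω : ℕ) : ℝ))} ≤
      ENNReal.ofReal (α / (1 - α / (n : ℝ))) :=
  two_stage_procedure_fwer_bound_general μ n α hα hα1 P hmeas hA2 hA3 pval hpvalT hpvalF r hr
end

section
/- Under independence with all θ_i → 0 (all true null p-values i.i.d. U(0,1) and P_{n+i} = 1 − P_i), the FWER of the two-stage Procedure 1 equals Σ_{r=0}^{n−1} C(n,r) (α/n)^r [ (1 − α/n)^{n−r} − (1 − α/n − α/(n−r))^{n−r} ]. -/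
/-!
Only the joint law of the true-null p-values `Pᵢ` matters, and by independence it is the uniform
measure on `[0,1]ⁿ`. Put `a = α/n`. No error occurs iff every `Pᵢ > a` and, if `r < n`, every
`Pᵢ > α/(n - r)`, where `r = #{i | Pᵢ ≥ 1 - a}` counts the false nulls rejected at stage one.
Off the null event `∃ i, Pᵢ = 1 - a`, this is the disjoint union over `S ⊆ {1, …, n}` of the boxes
`Pᵢ > 1 - a` (`i ∈ S`), `α/(n - |S|) < Pᵢ < 1 - a` (`i ∉ S`): a coordinate above `1 - a ≥ α` is
never rejected. The box has probability `a^|S| (1 - a - α/(n - |S|))^(n - |S|)`; grouping the boxes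
by `|S|` and subtracting from `1 = (a + (1 - a))ⁿ` gives the formula.
-/

open MeasureTheory ProbabilityTheory Finset

instance : IsProbabilityMeasure (volume.restrict (Set.Icc (0 : ℝ) 1)) :=
  ⟨by simp⟩

section UniformLaw

variable {Ω : Type*} [MeasurableSpace Ω] {μ : Measure Ω} [IsProbabilityMeasure μ]

theorem map_eq_volume_restrict_Icc_of_cdf {X : Ω → ℝ} (hX : Measurable X)
    (hcdf : ∀ p : ℝ, 0 ≤ p → p ≤ 1 → μ {ω | X ω ≤ p} = ENNReal.ofReal p) :
    μ.map X = volume.restrict (Set.Icc 0 1) := by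
  refine Measure.ext_of_Iic _ _ fun p => ?_
  have hIcc : Set.Iic p ∩ Set.Icc 0 1 = Set.Icc 0 (min p 1) := by
    ext x
    simp [and_left_comm]
  rw [Measure.map_apply hX measurableSet_Iic, Measure.restrict_apply measurableSet_Iic, hIcc,
    Real.volume_Icc, sub_zero]
  change μ {ω | X ω ≤ p} = _
  rcases lt_or_ge p 0 with hp | hp
  · rw [ENNReal.ofReal_of_nonpos (by simp [hp.le])]
    exact measure_mono_null (fun ω (hω : X ω ≤ p) => show X ω ≤ 0 by linarith)
      ((hcdf 0 le_rfl zero_le_one).trans ENNReal.ofReal_zero)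
  rcases le_or_gt p 1 with hp1 | hp1
  · rw [min_eq_left hp1, hcdf p hp hp1]
  · rw [min_eq_right hp1.le, ENNReal.ofReal_one]
    refine le_antisymm prob_le_one ?_
    calc (1 : ENNReal) = μ {ω | X ω ≤ 1} := by rw [hcdf 1 zero_le_one le_rfl, ENNReal.ofReal_one]
      _ ≤ μ {ω | X ω ≤ p} := measure_mono fun ω (hω : X ω ≤ 1) => show X ω ≤ p by linarith

theorem map_pi_eq_pi_volume_restrict_Icc {ι : Type*} [Fintype ι] {P : ι → Ω → ℝ}
    (hmeas : ∀ i, Measurable (P i))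
    (hcdf : ∀ i, ∀ p : ℝ, 0 ≤ p → p ≤ 1 → μ {ω | P i ω ≤ p} = ENNReal.ofReal p)
    (hindep : iIndepFun P μ) :
    μ.map (fun ω i => P i ω) = Measure.pi fun _ => volume.restrict (Set.Icc 0 1) := by
  rw [hindep.map_fun_eq_pi_map fun i => (hmeas i).aemeasurable]
  simp_rw [map_eq_volume_restrict_Icc_of_cdf (hmeas _) (hcdf _)]

end UniformLaw

theorem volume_restrict_Icc_Ioi {b : ℝ} (hb : 0 ≤ b) :
    volume.restrict (Set.Icc 0 1) (Set.Ioi b) = ENNReal.ofReal (1 - b) := by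
  have : Set.Ioi b ∩ Set.Icc 0 1 = Set.Ioc b 1 := by
    ext x
    simp only [Set.mem_inter_iff, Set.mem_Ioi, Set.mem_Icc, Set.mem_Ioc]
    constructor
    · rintro ⟨hbx, -, hx1⟩
      exact ⟨hbx, hx1⟩
    · rintro ⟨hbx, hx1⟩
      exact ⟨hbx, hb.trans hbx.le, hx1⟩
  rw [Measure.restrict_apply measurableSet_Ioi, this, Real.volume_Ioc]

theorem volume_restrict_Icc_Ioo {b c : ℝ} (hb : 0 ≤ b) (hc : c ≤ 1) :
    volume.restrict (Set.Icc 0 1) (Set.Ioo b c) = ENNReal.ofReal (c - b) := by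
  rw [Measure.restrict_apply measurableSet_Ioo,
    Set.inter_eq_left.mpr (Set.Ioo_subset_Icc_self.trans (Set.Icc_subset_Icc hb hc)),
    Real.volume_Ioo]

theorem one_sub_sum_powerset_pow_card {R : Type*} [CommRing R] (n : ℕ) (a : R) (d : ℕ → R) :
    1 - ∑ S : Finset (Fin n), a ^ #S * d #S ^ (n - #S) =
      ∑ k ∈ range n, (n.choose k : R) * a ^ k * ((1 - a) ^ (n - k) - d k ^ (n - k)) := by
  have hbinom := add_pow a (1 - a) n
  rw [add_sub_cancel, one_pow, sum_range_succ] at hbinom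
  have hpowerset := sum_powerset_apply_card (fun k => a ^ k * d k ^ (n - k))
    (x := (univ : Finset (Fin n)))
  simp only [powerset_univ, card_univ, Fintype.card_fin, nsmul_eq_mul] at hpowerset
  rw [hpowerset, sum_range_succ]
  simp only [mul_sub, sum_sub_distrib, Nat.choose_self, Nat.cast_one, Nat.sub_self, pow_zero,
    mul_one, one_mul] at hbinom ⊢
  simp only [mul_comm, mul_left_comm, mul_assoc] at hbinom ⊢
  linear_combination hbinom

namespace TwoStageProcedure

variable {n : ℕ} (a : ℝ) (c : ℕ → ℝ)

noncomputable def stageOneRejections (x : Fin n → ℝ) : ℕ :=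
  #{j : Fin n ⊕ Fin n | Sum.elim x (fun i => 1 - x i) j ≤ a}

/-- The coordinates of `x` are the true-null p-values and the false-null ones are `1 - x i`;
`a` is the stage-one threshold and `c r` the stage-two threshold after `r` stage-one rejections. -/
def familywiseErrorSet : Set (Fin n → ℝ) :=
  {x | ∃ i, x i ≤ a ∨ (stageOneRejections a x < n ∧ x i ≤ c (stageOneRejections a x))}

def noErrorBox (S : Finset (Fin n)) : Set (Fin n → ℝ) :=
  Set.univ.pi fun i => if i ∈ S then Set.Ioi (1 - a) else Set.Ioo (c #S) (1 - a)

variable {a c}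

theorem stageOneRejections_eq_card {x : Fin n → ℝ} (hx : ∀ i, a < x i) :
    stageOneRejections a x = #{i | 1 - a ≤ x i} := by
  simp only [stageOneRejections, card_filter, Fintype.sum_sum_type, Sum.elim_inl, Sum.elim_inr]
  simp [(hx _).not_ge, add_comm]

theorem mem_noErrorBox {S : Finset (Fin n)} {x : Fin n → ℝ} :
    x ∈ noErrorBox a c S ↔
      (∀ i ∈ S, 1 - a < x i) ∧ ∀ i ∉ S, c #S < x i ∧ x i < 1 - a := by
  simp only [noErrorBox, Set.mem_univ_pi]
  constructor
  · intro h
    exact ⟨fun i hi => by simpa [hi] using h i, fun i hi => by simpa [hi] using h i⟩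
  · rintro ⟨hS, hSc⟩ i
    by_cases hi : i ∈ S
    · simpa [hi] using hS i hi
    · simpa [hi] using hSc i hi

theorem eq_filter_of_mem_noErrorBox {S : Finset (Fin n)} {x : Fin n → ℝ}
    (hx : x ∈ noErrorBox a c S) : S = ({i | 1 - a ≤ x i} : Finset (Fin n)) := by
  rw [mem_noErrorBox] at hx
  ext i
  by_cases hi : i ∈ S
  · simp only [hi, mem_filter, mem_univ, true_and, true_iff]
    exact (hx.1 i hi).le
  · simp only [hi, mem_filter, mem_univ, true_and, false_iff, not_le]
    exact (hx.2 i hi).2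

theorem noErrorBox_subset_compl (hc : ∀ k < n, a ≤ c k ∧ c k ≤ 1 - a) (S : Finset (Fin n)) :
    noErrorBox a c S ⊆ (familywiseErrorSet a c)ᶜ := by
  intro x hx
  have hS := eq_filter_of_mem_noErrorBox hx
  rw [mem_noErrorBox] at hx
  have hgt : ∀ i, a < x i := by
    intro i
    by_cases hi : i ∈ S
    · linarith [hx.1 i hi, hc 0 i.pos]
    · linarith [(hx.2 i hi).1, hc _ (by simpa using card_lt_univ_of_notMem hi)]
  rintro ⟨i, hi | ⟨hlt, hle⟩⟩
  · exact (hgt i).not_ge hi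
  rw [stageOneRejections_eq_card hgt, ← hS] at hlt hle
  by_cases hi : i ∈ S
  · linarith [hx.1 i hi, hc _ hlt]
  · linarith [(hx.2 i hi).1]

theorem mem_noErrorBox_of_notMem {x : Fin n → ℝ} (hx : x ∉ familywiseErrorSet a c)
    (hne : ∀ i, x i ≠ 1 - a) :
    x ∈ noErrorBox a c ({i | 1 - a ≤ x i} : Finset (Fin n)) := by
  simp only [familywiseErrorSet, Set.mem_ofPred_eq, not_exists, not_or, not_and, not_le] at hx
  rw [mem_noErrorBox, ← stageOneRejections_eq_card fun i => (hx i).1]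
  refine ⟨fun i hi => lt_of_le_of_ne' (mem_filter.1 hi).2 (hne i), fun i hi => ⟨?_, ?_⟩⟩
  · refine (hx i).2 ?_
    rw [stageOneRejections_eq_card fun i => (hx i).1]
    simpa using card_lt_univ_of_notMem hi
  · simpa only [mem_filter, mem_univ, true_and, not_le] using hi

theorem pairwise_disjoint_noErrorBox :
    Pairwise (Function.onFun Disjoint (noErrorBox (n := n) a c)) :=
  fun _ _ hST => Set.disjoint_left.2 fun _ hS hT =>
    hST ((eq_filter_of_mem_noErrorBox hS).trans (eq_filter_of_mem_noErrorBox hT).symm)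

theorem measurableSet_noErrorBox (S : Finset (Fin n)) : MeasurableSet (noErrorBox a c S) :=
  MeasurableSet.univ_pi fun i => by
    split_ifs
    exacts [measurableSet_Ioi, measurableSet_Ioo]

theorem compl_familywiseErrorSet_ae_eq (m : Fin n → Measure ℝ) [∀ i, SigmaFinite (m i)]
    [∀ i, NullSingletonClass (m i)] (hc : ∀ k < n, a ≤ c k ∧ c k ≤ 1 - a) :
    ((familywiseErrorSet a c)ᶜ : Set (Fin n → ℝ)) =ᵐ[Measure.pi m] ⋃ S, noErrorBox a c S := by
  have hne : ∀ᵐ x ∂Measure.pi m, ∀ i, x i ≠ 1 - a :=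
    ae_all_iff.2 fun i => Measure.ae_eval_ne m i _
  filter_upwards [hne] with x hx
  refine propext ⟨fun hF => Set.mem_iUnion.2 ⟨_, mem_noErrorBox_of_notMem hF hx⟩, fun hS => ?_⟩
  obtain ⟨S, hS⟩ := Set.mem_iUnion.1 hS
  exact noErrorBox_subset_compl hc S hS

theorem pi_noErrorBox (ha : 0 ≤ a) (hc : ∀ k < n, a ≤ c k ∧ c k ≤ 1 - a) (S : Finset (Fin n)) :
    Measure.pi (fun _ => volume.restrict (Set.Icc 0 1)) (noErrorBox a c S) =
      ENNReal.ofReal (a ^ #S * (1 - a - c #S) ^ (n - #S)) := by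
  have hlt : ∀ i ∉ S, #S < n := fun i hi => by simpa using card_lt_univ_of_notMem hi
  have hside : ∀ i, volume.restrict (Set.Icc 0 1)
      (if i ∈ S then Set.Ioi (1 - a) else Set.Ioo (c #S) (1 - a)) =
        ENNReal.ofReal (if i ∈ S then a else 1 - a - c #S) := by
    intro i
    split_ifs with hi
    · rw [volume_restrict_Icc_Ioi (by linarith [hc 0 i.pos]), sub_sub_cancel]
    · rw [volume_restrict_Icc_Ioo (by linarith [hc _ (hlt i hi)]) (by linarith), sub_right_comm]
  have hnonneg : ∀ i ∈ univ, 0 ≤ if i ∈ S then a else 1 - a - c #S := by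
    intro i _
    split_ifs with hi
    exacts [ha, by linarith [hc _ (hlt i hi)]]
  rw [noErrorBox, Measure.pi_pi, prod_congr rfl fun i _ => hside i,
    ← ENNReal.ofReal_prod_of_nonneg hnonneg, prod_ite, prod_const, prod_const]
  simp [filter_not, card_sdiff]

theorem nullMeasurableSet_familywiseErrorSet (m : Fin n → Measure ℝ) [∀ i, SigmaFinite (m i)]
    [∀ i, NullSingletonClass (m i)] (hc : ∀ k < n, a ≤ c k ∧ c k ≤ 1 - a) :
    NullMeasurableSet (familywiseErrorSet a c) (Measure.pi m) :=
  ((MeasurableSet.iUnion measurableSet_noErrorBox).nullMeasurableSet.congr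
    (compl_familywiseErrorSet_ae_eq m hc).symm).of_compl

theorem pi_familywiseErrorSet (ha : 0 ≤ a) (hc : ∀ k < n, a ≤ c k ∧ c k ≤ 1 - a) :
    Measure.pi (fun _ : Fin n => volume.restrict (Set.Icc 0 1)) (familywiseErrorSet a c) =
      ENNReal.ofReal (∑ k ∈ range n, (n.choose k : ℝ) * a ^ k *
        ((1 - a) ^ (n - k) - (1 - a - c k) ^ (n - k))) := by
  have hae :=
    (compl_familywiseErrorSet_ae_eq (fun _ => volume.restrict (Set.Icc (0 : ℝ) 1)) hc).compl
  rw [compl_compl] at hae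
  have hnonneg : ∀ S ∈ (univ : Finset (Finset (Fin n))),
      0 ≤ a ^ #S * (1 - a - c #S) ^ (n - #S) := by
    intro S _
    refine mul_nonneg (pow_nonneg ha _) ?_
    rcases (card_le_univ S).lt_or_eq with hlt | heq
    · exact pow_nonneg (by linarith [hc _ (by simpa using hlt)]) _
    · simp [heq]
  rw [measure_congr hae, prob_compl_eq_one_sub (MeasurableSet.iUnion measurableSet_noErrorBox),
    measure_iUnion pairwise_disjoint_noErrorBox measurableSet_noErrorBox, tsum_fintype]
  simp_rw [pi_noErrorBox ha hc]
  rw [← ENNReal.ofReal_sum_of_nonneg hnonneg, ← ENNReal.ofReal_one,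
    ← ENNReal.ofReal_sub _ (sum_nonneg hnonneg)]
  exact congrArg _ (one_sub_sum_powerset_pow_card n a fun k => 1 - a - c k)

end TwoStageProcedure

theorem two_stage_procedure_fwer_exact_uniform_general
    {Ω : Type*} [MeasurableSpace Ω] (μ : Measure Ω) [IsProbabilityMeasure μ]
    (n : ℕ) (α : ℝ) (hα : 0 < α)
    (hαsmall : α + α / (n : ℝ) ≤ 1)
    (P : Fin n → Ω → ℝ)
    (hmeas : ∀ i, Measurable (P i))
    -- each true null p-value is exactly U(0,1)
    (hunif : ∀ i, ∀ p : ℝ, 0 ≤ p → p ≤ 1 →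
      μ {ω | P i ω ≤ p} = ENNReal.ofReal p)
    -- independence
    (hindep : ProbabilityTheory.iIndepFun P μ)
    -- the full family of 2n p-values: true nulls inl, false nulls inr
    (pval : (Fin n ⊕ Fin n) → Ω → ℝ)
    (hpvalT : ∀ i, pval (Sum.inl i) = P i)
    (hpvalF : ∀ i ω, pval (Sum.inr i) ω = 1 - P i ω)
    (r : Ω → ℕ)
    (hr : ∀ ω, r ω = (Finset.univ.filter
      (fun j : Fin n ⊕ Fin n => pval j ω ≤ α / (n : ℝ))).card) :
    μ {ω | ∃ i : Fin n, P i ω ≤ α / (n : ℝ) ∨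
        (r ω < n ∧ P i ω ≤ α / ((n - r ω : ℕ) : ℝ))} =
      ENNReal.ofReal (∑ k ∈ Finset.range n, (n.choose k : ℝ) * (α / n) ^ k *
        ((1 - α / n) ^ (n - k) - (1 - α / n - α / ((n - k : ℕ) : ℝ)) ^ (n - k))) := by
  set a := α / n
  set c : ℕ → ℝ := fun k => α / ((n - k : ℕ) : ℝ)
  have hc : ∀ k < n, a ≤ c k ∧ c k ≤ 1 - a := by
    intro k hk
    have hk' : (1 : ℝ) ≤ ((n - k : ℕ) : ℝ) := by exact_mod_cast (by omega : 1 ≤ n - k)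
    refine ⟨div_le_div_of_nonneg_left hα.le (by linarith) (by exact_mod_cast Nat.sub_le n k), ?_⟩
    linarith [div_le_self hα.le hk']
  have hr' : ∀ ω, r ω = TwoStageProcedure.stageOneRejections a (fun i => P i ω) := by
    intro ω
    rw [hr ω, TwoStageProcedure.stageOneRejections]
    congr
    ext j
    cases j <;> simp [hpvalT, hpvalF]
  have hevent : {ω | ∃ i : Fin n, P i ω ≤ a ∨ (r ω < n ∧ P i ω ≤ α / ((n - r ω : ℕ) : ℝ))} =
      (fun ω i => P i ω) ⁻¹' TwoStageProcedure.familywiseErrorSet a c := by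
    ext ω
    simp [TwoStageProcedure.familywiseErrorSet, hr', c]
  have hlaw := map_pi_eq_pi_volume_restrict_Icc hmeas hunif hindep
  rw [hevent, ← Measure.map_apply₀ (measurable_pi_lambda _ hmeas).aemeasurable
      (hlaw ▸ TwoStageProcedure.nullMeasurableSet_familywiseErrorSet _ hc), hlaw,
    TwoStageProcedure.pi_familywiseErrorSet (by positivity) hc]

/-- Under independence with all θᵢ = 0 (true null p-values i.i.d.
U(0,1), false null p-values 1 − Pᵢ), the FWER of the two-stage Procedure 1
equals Σ_{r=0}^{n−1} C(n,r) (α/n)^r [(1−α/n)^{n−r} − (1−α/n−α/(n−r))^{n−r}]. -/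
theorem two_stage_procedure_fwer_exact_uniform
    {Ω : Type*} [MeasurableSpace Ω] (μ : Measure Ω) [IsProbabilityMeasure μ]
    (n : ℕ) (hn : 1 ≤ n) (α : ℝ) (hα : 0 < α) (hα1 : α < 1)
    (hαsmall : α + α / (n : ℝ) ≤ 1)
    (P : Fin n → Ω → ℝ)
    (hmeas : ∀ i, Measurable (P i))
    -- each true null p-value is exactly U(0,1)
    (hunif : ∀ i, ∀ p : ℝ, 0 ≤ p → p ≤ 1 →
      μ {ω | P i ω ≤ p} = ENNReal.ofReal p)
    -- independence
    (hindep : ProbabilityTheory.iIndepFun P μ)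
    -- the full family of 2n p-values: true nulls inl, false nulls inr
    (pval : (Fin n ⊕ Fin n) → Ω → ℝ)
    (hpvalT : ∀ i, pval (Sum.inl i) = P i)
    (hpvalF : ∀ i ω, pval (Sum.inr i) ω = 1 - P i ω)
    (r : Ω → ℕ)
    (hr : ∀ ω, r ω = (Finset.univ.filter
      (fun j : Fin n ⊕ Fin n => pval j ω ≤ α / (n : ℝ))).card) :
    μ {ω | ∃ i : Fin n, P i ω ≤ α / (n : ℝ) ∨
        (r ω < n ∧ P i ω ≤ α / ((n - r ω : ℕ) : ℝ))} =
      ENNReal.ofReal (∑ k ∈ Finset.range n, (n.choose k : ℝ) * (α / n) ^ k *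
        ((1 - α / n) ^ (n - k) - (1 - α / n - α / ((n - k : ℕ) : ℝ)) ^ (n - k))) :=
  two_stage_procedure_fwer_exact_uniform_general μ n α hα hαsmall P hmeas hunif hindep pval hpvalT
    hpvalF r hr
end

section
/- The stepdown procedure with critical values α_i = α/(n − i + 1 + α), i = 1,...,n, applied to the 2n one-sided p-values P₁,...,P_{2n} (with P_{n+i} = 1 − P_i), strongly controls the FWER at level α under assumptions A.1, A.2, A.3: for every parameter vector θ, Pr_θ(at least one true null rejected) ≤ α. -/
/-!
Write `n` for the number of true nulls, `αⱼ` for the critical values and `Kᵢ` for the number of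
rejections the stepdown procedure makes on the false-null p-values `1 - Pₓ`, `x ≠ i`, alone. If a
true null is rejected, then the true null `i₀` with the smallest p-value satisfies
`P_{i₀} ≤ α_{K_{i₀} + 1}`. Since `Kᵢ` is a function of the other p-values, it is independent of
`Pᵢ`, and letting `p' ↑ 1 - α_{k+1}` in A.2 gives
`Pr(Kᵢ = k, Pᵢ ≤ α_{k+1}) ≤ α / (n - k) · Pr(Kᵢ = k, Pᵢ < 1 - α_{k+1})`,
the critical values being exactly those with `α_{k+1} / (1 - α_{k+1}) = α / (n - k)`. Finally,
pathwise, all `i` with `Pᵢ < 1 - α_{Kᵢ + 1}` share one value `K` of `Kᵢ` and there are at most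
`n - K` of them, so `∑ᵢ 1{Pᵢ < 1 - α_{Kᵢ + 1}} / (n - Kᵢ) ≤ 1`; taking expectations bounds the
FWER by `α`.
-/

open MeasureTheory Finset
open ProbabilityTheory
open scoped ENNReal

theorem Nat.sup_range_succ_ite_eq_findGreatest (C : ℕ → Prop) [DecidablePred C] (m : ℕ) :
    (range (m + 1)).sup (fun i => if C i then i else 0) = Nat.findGreatest C m := by
  induction m with
  | zero => simp
  | succ m ih =>
    rw [range_add_one, sup_insert, ih, Nat.findGreatest_succ]
    split_ifs
    · exact max_eq_left ((Nat.findGreatest_le m).trans m.le_succ)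
    · exact zero_max _

/-- `P₍ⱼ₎ ≤ c j` for the `j`-th smallest p-value means `j ≤ #{x ∈ s | p x ≤ c j}`, so this is the
number of rejections of the stepdown procedure with critical values `c 1, …, c m`. -/
noncomputable def stepdownIndex {κ : Type*} (c : ℕ → ℝ) (m : ℕ) (s : Finset κ) (p : κ → ℝ) : ℕ :=
  Nat.findGreatest (fun k => ∀ j ≤ k, 1 ≤ j → j ≤ #{x ∈ s | p x ≤ c j}) m

section stepdownIndex

variable {κ : Type*} {c : ℕ → ℝ} {m : ℕ} {s : Finset κ} {p : κ → ℝ}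

theorem stepdownIndex_le : stepdownIndex c m s p ≤ m := Nat.findGreatest_le m

theorem le_card_filter_of_le_stepdownIndex {j : ℕ} (hj1 : 1 ≤ j) (hj : j ≤ stepdownIndex c m s p) :
    j ≤ #{x ∈ s | p x ≤ c j} :=
  Nat.findGreatest_spec (P := fun k => ∀ j ≤ k, 1 ≤ j → j ≤ #{x ∈ s | p x ≤ c j})
    (Nat.zero_le m) (fun j hj0 hj1 => by omega) j hj hj1

theorem le_stepdownIndex {k : ℕ} (hk : k ≤ m) (h : ∀ j ≤ k, 1 ≤ j → j ≤ #{x ∈ s | p x ≤ c j}) :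
    k ≤ stepdownIndex c m s p :=
  Nat.le_findGreatest hk h

theorem stepdownIndex_congr {q : κ → ℝ} (h : ∀ x ∈ s, p x = q x) :
    stepdownIndex c m s p = stepdownIndex c m s q := by
  have hfilter (j : ℕ) : {x ∈ s | p x ≤ c j} = {x ∈ s | q x ≤ c j} :=
    filter_congr fun x hx => by rw [h x hx]
  simp only [stepdownIndex, hfilter]

theorem measurable_stepdownIndex (c : ℕ → ℝ) (m : ℕ) (s : Finset κ) :
    Measurable (fun p : κ → ℝ => stepdownIndex c m s p) := by
  refine measurable_findGreatest fun k _ => ?_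
  simp only [Set.ofPred_forall]
  refine .iInter fun j => .iInter fun _ => .iInter fun _ => ?_
  have hcount : Measurable (fun p : κ → ℝ => #{x ∈ s | p x ≤ c j}) := by
    simp only [card_filter]
    exact Finset.measurable_sum _ fun x _ =>
      Measurable.ite (measurableSet_le (measurable_pi_apply x) measurable_const)
        measurable_const measurable_const
  exact measurableSet_le measurable_const hcount

theorem sup_range_succ_ite_eq_stepdownIndex (c : ℕ → ℝ) (m : ℕ) (s : Finset κ) (p : κ → ℝ)
    [DecidablePred fun k => ∀ j ∈ Icc 1 k, j ≤ #{x ∈ s | p x ≤ c j}] :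
    (range (m + 1)).sup (fun k => if ∀ j ∈ Icc 1 k, j ≤ #{x ∈ s | p x ≤ c j} then k else 0) =
      stepdownIndex c m s p := by
  have hiff (k : ℕ) : (∀ j ∈ Icc 1 k, j ≤ #{x ∈ s | p x ≤ c j}) ↔
      ∀ j ≤ k, 1 ≤ j → j ≤ #{x ∈ s | p x ≤ c j} := by
    simp only [mem_Icc, and_imp]
    exact forall_congr' fun j => Imp.swap
  rw [Nat.sup_range_succ_ite_eq_findGreatest, stepdownIndex]
  exact le_antisymm (Nat.findGreatest_mono_left (fun k => (hiff k).1) m)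
    (Nat.findGreatest_mono_left (fun k => (hiff k).2) m)

end stepdownIndex

theorem card_filter_sumElim_le {α β : Type*} [Fintype α] [Fintype β] (f : α → ℝ) (g : β → ℝ)
    (t : ℝ) : #{x | Sum.elim f g x ≤ t} = #{a | f a ≤ t} + #{b | g b ≤ t} := by
  simp only [card_filter, Fintype.sum_sum_type, Sum.elim_inl, Sum.elim_inr]
  rfl

section looIndex

variable {ι : Type*} [Fintype ι] [DecidableEq ι]

/-- Leave-one-out index: the stepdown procedure run on the false-null p-values `1 - v x`, `x ≠ i`,
alone. -/
noncomputable def looIndex (c : ℕ → ℝ) (v : ι → ℝ) (i : ι) : ℕ :=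
  stepdownIndex c (Fintype.card ι - 1) (univ.erase i) (fun x => 1 - v x)

variable {c : ℕ → ℝ} {v : ι → ℝ}

theorem looIndex_lt_card (i : ι) : looIndex c v i < Fintype.card ι :=
  stepdownIndex_le.trans_lt (Nat.sub_lt (Fintype.card_pos_iff.2 ⟨i⟩) one_pos)

theorem looIndex_update (c : ℕ → ℝ) (v : ι → ℝ) (i : ι) (b : ℝ) :
    looIndex c (Function.update v i b) i = looIndex c v i :=
  stepdownIndex_congr fun x hx => by rw [Function.update_of_ne (ne_of_mem_erase hx)]

theorem measurable_looIndex (c : ℕ → ℝ) (i : ι) :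
    Measurable (fun v : ι → ℝ => looIndex c v i) :=
  (measurable_stepdownIndex _ _ _).comp (measurable_pi_lambda _ fun x =>
    measurable_const.sub (measurable_pi_apply x))

theorem exists_le_crit_looIndex_succ (hmono : MonotoneOn c (Set.Icc 1 (Fintype.card ι)))
    (hhalf : ∀ j ∈ Set.Icc 1 (Fintype.card ι), c j < 1 / 2)
    {i : ι} (h1 : 1 ≤ stepdownIndex c (Fintype.card ι) univ (Sum.elim v fun x => 1 - v x))
    (hi : v i ≤ c (stepdownIndex c (Fintype.card ι) univ (Sum.elim v fun x => 1 - v x))) :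
    ∃ i₀, v i₀ ≤ c (looIndex c v i₀ + 1) := by
  set r := stepdownIndex c (Fintype.card ι) univ (Sum.elim v fun x => 1 - v x)
  have hr : r ≤ Fintype.card ι := stepdownIndex_le
  obtain ⟨i₀, -, hmin⟩ := exists_min_image univ v ⟨i, mem_univ i⟩
  refine ⟨i₀, ?_⟩
  set k := looIndex c v i₀
  have hk : k < Fintype.card ι := looIndex_lt_card i₀
  have hi₀ : v i₀ ≤ c r := (hmin i (mem_univ i)).trans hi
  rcases le_or_gt r k with hrk | hkr
  · exact hi₀.trans (hmono ⟨h1, hr⟩ ⟨by omega, by omega⟩ (by omega))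
  by_contra! hlt
  -- Below level `k + 1` no true null qualifies, so the stepdown counts at those levels are
  -- counts of false nulls other than `i₀`, which makes `k + 1` a level for `looIndex c v i₀`.
  have hcond : ∀ j ≤ k + 1, 1 ≤ j → j ≤ #{x ∈ univ.erase i₀ | 1 - v x ≤ c j} := by
    intro j hjk hj1
    have hcj : c j ≤ c (k + 1) := hmono ⟨hj1, by omega⟩ ⟨by omega, by omega⟩ hjk
    have htrue : #{x | v x ≤ c j} = 0 :=
      card_eq_zero.2 (filter_eq_empty_iff.2 fun x _ hx => by linarith [hmin x (mem_univ x)])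
    have hfalse : {x ∈ univ.erase i₀ | 1 - v x ≤ c j} = ({x | 1 - v x ≤ c j} : Finset ι) := by
      rw [filter_erase, erase_eq_of_notMem]
      simp only [mem_filter, mem_univ, true_and, not_le]
      linarith [hhalf r ⟨h1, hr⟩, hhalf j ⟨hj1, by omega⟩]
    have := le_card_filter_of_le_stepdownIndex hj1 (show j ≤ r by omega)
    rwa [card_filter_sumElim_le, htrue, zero_add, ← hfalse] at this
  have hk1 : k + 1 ≤ Fintype.card ι - 1 :=
    (hcond (k + 1) le_rfl (by omega)).trans ((card_filter_le _ _).trans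
      (by rw [card_erase_of_mem (mem_univ i₀), card_univ]))
  have : k + 1 ≤ k := le_stepdownIndex hk1 hcond
  omega

theorem looIndex_le_of_lt_one_sub (hmono : MonotoneOn c (Set.Icc 1 (Fintype.card ι))) {i' : ι}
    (hi' : v i' < 1 - c (looIndex c v i' + 1)) (i : ι) : looIndex c v i ≤ looIndex c v i' := by
  by_contra! hlt
  have hi : looIndex c v i < Fintype.card ι := looIndex_lt_card i
  -- Every count of `looIndex c v i` up to level `looIndex c v i' + 1` is also a count for `i'`,
  -- since `i'` itself is too small to be counted.
  have : looIndex c v i' + 1 ≤ looIndex c v i' := by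
    refine le_stepdownIndex (by omega) fun j hj hj1 => ?_
    refine (le_card_filter_of_le_stepdownIndex (m := Fintype.card ι - 1) hj1
      (show j ≤ looIndex c v i by omega)).trans (card_le_card fun x hx => ?_)
    simp only [mem_filter, mem_erase, mem_univ, and_true] at hx ⊢
    refine ⟨?_, hx.2⟩
    rintro rfl
    linarith [hmono ⟨hj1, by omega⟩ ⟨by omega, by omega⟩ hj]
  omega

theorem card_filter_add_looIndex_le (hmono : MonotoneOn c (Set.Icc 1 (Fintype.card ι)))
    {i₁ : ι} (hi₁ : v i₁ < 1 - c (looIndex c v i₁ + 1)) :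
    #{x | v x < 1 - c (looIndex c v x + 1)} + looIndex c v i₁ ≤ Fintype.card ι := by
  set K := looIndex c v i₁
  set S : Finset ι := {x | v x < 1 - c (looIndex c v x + 1)}
  set L : Finset ι := {x ∈ univ.erase i₁ | 1 - v x ≤ c K}
  rcases Nat.eq_zero_or_pos K with hK | hK
  · simpa [hK] using card_filter_le univ _
  have hK' : K < Fintype.card ι := looIndex_lt_card i₁
  have hdisj : Disjoint S L := by
    refine disjoint_left.2 fun x hxS hxL => ?_
    have hvx := (mem_filter.1 hxS).2
    rw [le_antisymm (looIndex_le_of_lt_one_sub hmono hi₁ x)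
      (looIndex_le_of_lt_one_sub hmono hvx i₁)] at hvx
    linarith [(mem_filter.1 hxL).2, hmono ⟨hK, hK'.le⟩ ⟨by omega, by omega⟩ K.le_succ]
  calc #S + K ≤ #S + #L := Nat.add_le_add_left (le_card_filter_of_le_stepdownIndex hK le_rfl) _
    _ = #(S ∪ L) := (card_union_of_disjoint hdisj).symm
    _ ≤ Fintype.card ι := card_le_univ _

theorem sum_inv_card_sub_looIndex_le_one (hmono : MonotoneOn c (Set.Icc 1 (Fintype.card ι))) :
    ∑ i with v i < 1 - c (looIndex c v i + 1), ((Fintype.card ι : ℝ) - looIndex c v i)⁻¹ ≤ 1 := by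
  rcases eq_empty_or_nonempty {i | v i < 1 - c (looIndex c v i + 1)} with hS | ⟨i₁, hi₁⟩
  · simp [hS]
  have hi₁' := (mem_filter.1 hi₁).2
  have hK : ∀ i ∈ ({i | v i < 1 - c (looIndex c v i + 1)} : Finset ι),
      looIndex c v i = looIndex c v i₁ := fun i hi =>
    le_antisymm (looIndex_le_of_lt_one_sub hmono hi₁' i)
      (looIndex_le_of_lt_one_sub hmono (mem_filter.1 hi).2 i₁)
  have hcard : (#{i | v i < 1 - c (looIndex c v i + 1)} : ℝ) + looIndex c v i₁
      ≤ Fintype.card ι := by exact_mod_cast card_filter_add_looIndex_le hmono hi₁'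
  have hpos : (1 : ℝ) ≤ #{i | v i < 1 - c (looIndex c v i + 1)} := by
    exact_mod_cast card_pos.2 ⟨i₁, hi₁⟩
  rw [sum_congr rfl fun i hi => by rw [hK i hi], sum_const, nsmul_eq_mul,
    mul_inv_le_iff₀ (by linarith), one_mul]
  linarith

theorem sum_sum_ite_looIndex_le_one (hmono : MonotoneOn c (Set.Icc 1 (Fintype.card ι))) :
    ∑ i, ∑ k ∈ range (Fintype.card ι), (if looIndex c v i = k ∧ v i < 1 - c (k + 1) then
      ENNReal.ofReal ((Fintype.card ι : ℝ) - k)⁻¹ else 0) ≤ 1 := by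
  simp only [ite_and, sum_ite_eq, mem_range, looIndex_lt_card, if_true]
  rw [← sum_filter, ← ENNReal.ofReal_sum_of_nonneg fun i _ => inv_nonneg.2 (sub_nonneg.2
    (by exact_mod_cast (looIndex_lt_card i).le))]
  exact ENNReal.ofReal_le_one.2 (sum_inv_card_sub_looIndex_le_one hmono)

end looIndex

namespace ProbabilityTheory

theorem iIndepFun.indepFun_of_update_invariant {ι Ω β γ : Type*} [Fintype ι] [DecidableEq ι]
    [MeasurableSpace Ω] {μ : Measure Ω} [MeasurableSpace β] [MeasurableSpace γ] [Inhabited β]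
    {X : ι → Ω → β} (hX : iIndepFun X μ) (hXm : ∀ j, Measurable (X j)) {g : (ι → β) → γ}
    (hg : Measurable g) {i : ι} (hgi : ∀ v b, g (Function.update v i b) = g v) :
    IndepFun (fun ω => g (fun j => X j ω)) (X i) μ := by
  let extend (u : ({i}ᶜ : Finset ι) → β) (j : ι) : β :=
    if h : j ∈ ({i}ᶜ : Finset ι) then u ⟨j, h⟩ else default
  have hextend : Measurable extend := measurable_pi_lambda _ fun j => by
    by_cases h : j ∈ ({i}ᶜ : Finset ι)
    · simpa only [extend, dif_pos h] using measurable_pi_apply _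
    · simpa only [extend, dif_neg h] using measurable_const
  have key := (hX.indepFun_finset {i}ᶜ {i} disjoint_compl_left hXm).comp (hg.comp hextend)
    (measurable_pi_apply ⟨i, mem_singleton_self i⟩)
  convert key using 1
  · funext ω
    rw [Function.comp_apply, Function.comp_apply, ← hgi _ default]
    congr 1
    funext j
    by_cases h : j = i
    · subst h; simp [extend]
    · simp [extend, h]
  · rfl

end ProbabilityTheory

theorem sum_mul_measure_le_one_of_sum_indicator_le_one {Ω ι : Type*} [MeasurableSpace Ω]
    {μ : Measure Ω} [IsProbabilityMeasure μ] {s : Finset ι} {B : ι → Set Ω}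
    (hB : ∀ t ∈ s, MeasurableSet (B t)) (w : ι → ℝ≥0∞)
    (h : ∀ ω, ∑ t ∈ s, (B t).indicator (fun _ => w t) ω ≤ 1) :
    ∑ t ∈ s, w t * μ (B t) ≤ 1 :=
  calc ∑ t ∈ s, w t * μ (B t) = ∫⁻ ω, ∑ t ∈ s, (B t).indicator (fun _ => w t) ω ∂μ := by
        rw [lintegral_finsetSum _ fun t ht => measurable_const.indicator (hB t ht)]
        exact sum_congr rfl fun t ht => (lintegral_indicator_const (hB t ht) _).symm
    _ ≤ ∫⁻ _, 1 ∂μ := lintegral_mono h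
    _ = 1 := by simp

section ConditionalDominance

variable {Ω : Type*} [MeasurableSpace Ω] {μ : Measure Ω} {X : Ω → ℝ} {p q : ℝ}

theorem measure_le_le_ofReal_div_mul_measure_lt (hp : 0 ≤ p) (hpq : p < q) (hq : q ≤ 1)
    (hdom : ∀ p', p ≤ p' → p' ≤ 1 →
      ENNReal.ofReal p' * μ {ω | X ω ≤ p} ≤ ENNReal.ofReal p * μ {ω | X ω ≤ p'}) :
    μ {ω | X ω ≤ p} ≤ ENNReal.ofReal (p / q) * μ {ω | X ω < q} := by
  have hq0 : 0 < q := hp.trans_lt hpq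
  have hlim : ENNReal.ofReal q * μ {ω | X ω ≤ p} ≤ ENNReal.ofReal p * μ {ω | X ω < q} := by
    refine le_of_tendsto (ENNReal.Tendsto.mul_const ((ENNReal.continuous_ofReal.tendsto q).mono_left
      (nhdsWithin_le_nhds (s := Set.Iio q))) (Or.inl (ENNReal.ofReal_pos.2 hq0).ne')) ?_
    filter_upwards [Ioo_mem_nhdsLT hpq] with p' hp'
    exact (hdom p' hp'.1.le (hp'.2.le.trans hq)).trans
      (by gcongr; exact hp'.2)
  calc μ {ω | X ω ≤ p} = ENNReal.ofReal q⁻¹ * (ENNReal.ofReal q * μ {ω | X ω ≤ p}) := by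
        rw [← mul_assoc, ← ENNReal.ofReal_mul (inv_nonneg.2 hq0.le), inv_mul_cancel₀ hq0.ne',
          ENNReal.ofReal_one, one_mul]
    _ ≤ ENNReal.ofReal q⁻¹ * (ENNReal.ofReal p * μ {ω | X ω < q}) := by gcongr
    _ = ENNReal.ofReal (p / q) * μ {ω | X ω < q} := by
        rw [← mul_assoc, ← ENNReal.ofReal_mul (inv_nonneg.2 hq0.le), inv_mul_eq_div]

theorem measure_inter_le_le_ofReal_div_mul {K : Ω → ℕ} (hKX : IndepFun K X μ) (hp : 0 ≤ p)
    (hpq : p < q) (hq : q ≤ 1)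
    (hdom : ∀ p', p ≤ p' → p' ≤ 1 →
      ENNReal.ofReal p' * μ {ω | X ω ≤ p} ≤ ENNReal.ofReal p * μ {ω | X ω ≤ p'}) (k : ℕ) :
    μ ({ω | K ω = k} ∩ {ω | X ω ≤ p})
      ≤ ENNReal.ofReal (p / q) * μ ({ω | K ω = k} ∩ {ω | X ω < q}) :=
  calc μ ({ω | K ω = k} ∩ {ω | X ω ≤ p})
      = μ {ω | K ω = k} * μ {ω | X ω ≤ p} :=
        hKX.measure_inter_preimage_eq_mul _ _ (measurableSet_singleton k) measurableSet_Iic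
    _ ≤ μ {ω | K ω = k} * (ENNReal.ofReal (p / q) * μ {ω | X ω < q}) := by
        gcongr; exact measure_le_le_ofReal_div_mul_measure_lt hp hpq hq hdom
    _ = ENNReal.ofReal (p / q) * μ ({ω | K ω = k} ∩ {ω | X ω < q}) := by
        rw [mul_left_comm]
        exact congrArg _ (hKX.measure_inter_preimage_eq_mul _ _ (measurableSet_singleton k)
          measurableSet_Iio).symm

end ConditionalDominance

theorem sum_sum_measure_looIndex_le_ofReal {ι Ω : Type*} [Fintype ι] [DecidableEq ι]
    [MeasurableSpace Ω] {μ : Measure Ω} [IsProbabilityMeasure μ] {X : ι → Ω → ℝ}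
    (hXm : ∀ i, Measurable (X i)) (hX : iIndepFun X μ)
    (hdom : ∀ i, ∀ p p' : ℝ, 0 ≤ p → p ≤ p' → p' ≤ 1 →
      ENNReal.ofReal p' * μ {ω | X i ω ≤ p} ≤ ENNReal.ofReal p * μ {ω | X i ω ≤ p'})
    {c : ℕ → ℝ} {α : ℝ} (hα : 0 ≤ α) (hmono : MonotoneOn c (Set.Icc 1 (Fintype.card ι)))
    (hc : ∀ j ∈ Set.Icc 1 (Fintype.card ι), 0 ≤ c j ∧ c j < 1 / 2)
    (hratio : ∀ k < Fintype.card ι, c (k + 1) / (1 - c (k + 1)) = α / (Fintype.card ι - k)) :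
    ∑ i, ∑ k ∈ range (Fintype.card ι),
      μ ({ω | looIndex c (fun j => X j ω) i = k} ∩ {ω | X i ω ≤ c (k + 1)}) ≤
        ENNReal.ofReal α := by
  set n := Fintype.card ι
  set K : ι → Ω → ℕ := fun i ω => looIndex c (fun j => X j ω) i
  have hB (x : ι × ℕ) : MeasurableSet ({ω | K x.1 ω = x.2} ∩ {ω | X x.1 ω < 1 - c (x.2 + 1)}) :=
    ((measurable_looIndex c x.1).comp (measurable_pi_lambda _ hXm) (measurableSet_singleton _)).inter
      (measurableSet_lt (hXm x.1) measurable_const)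
  have hterm (i : ι) (k : ℕ) (hk : k ∈ range n) :
      μ ({ω | K i ω = k} ∩ {ω | X i ω ≤ c (k + 1)}) ≤ ENNReal.ofReal α *
        (ENNReal.ofReal ((n : ℝ) - k)⁻¹ * μ ({ω | K i ω = k} ∩ {ω | X i ω < 1 - c (k + 1)})) := by
    obtain ⟨hc0, hc1⟩ := hc (k + 1) ⟨by omega, mem_range.1 hk⟩
    rw [← mul_assoc, ← ENNReal.ofReal_mul hα, ← div_eq_mul_inv, ← hratio k (mem_range.1 hk)]
    exact measure_inter_le_le_ofReal_div_mul
      (hX.indepFun_of_update_invariant hXm (measurable_looIndex c i) (looIndex_update c · i))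
      hc0 (by linarith) (by linarith) (fun p' => hdom i _ p' hc0) k
  calc ∑ i, ∑ k ∈ range n, μ ({ω | K i ω = k} ∩ {ω | X i ω ≤ c (k + 1)})
      ≤ ∑ i, ∑ k ∈ range n, ENNReal.ofReal α * (ENNReal.ofReal ((n : ℝ) - k)⁻¹ *
          μ ({ω | K i ω = k} ∩ {ω | X i ω < 1 - c (k + 1)})) :=
        sum_le_sum fun i _ => sum_le_sum (hterm i)
    _ = ENNReal.ofReal α * ∑ x ∈ univ ×ˢ range n, ENNReal.ofReal ((n : ℝ) - x.2)⁻¹ *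
          μ ({ω | K x.1 ω = x.2} ∩ {ω | X x.1 ω < 1 - c (x.2 + 1)}) := by
        simp only [sum_product, mul_sum]
    _ ≤ ENNReal.ofReal α * 1 := by
        gcongr
        refine sum_mul_measure_le_one_of_sum_indicator_le_one (fun x _ => hB x) _ fun ω => ?_
        rw [sum_product]
        simpa [Set.indicator_apply] using sum_sum_ite_looIndex_le_one (v := fun j => X j ω) hmono
    _ = ENNReal.ofReal α := mul_one _

section CriticalValues

variable {n : ℕ} {α : ℝ} {crit : ℕ → ℝ}

theorem crit_monotoneOn (hα : 0 ≤ α)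
    (hcrit : ∀ j, 1 ≤ j → j ≤ n → crit j = α / ((n : ℝ) - (j : ℝ) + 1 + α)) :
    MonotoneOn crit (Set.Icc 1 n) := by
  intro j hj j' hj' hjj'
  have : (j' : ℝ) ≤ n := by exact_mod_cast hj'.2
  rw [hcrit j hj.1 hj.2, hcrit j' hj'.1 hj'.2]
  gcongr

theorem crit_nonneg (hα : 0 ≤ α)
    (hcrit : ∀ j, 1 ≤ j → j ≤ n → crit j = α / ((n : ℝ) - (j : ℝ) + 1 + α)) {j : ℕ}
    (hj : j ∈ Set.Icc 1 n) : 0 ≤ crit j := by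
  have : (j : ℝ) ≤ n := by exact_mod_cast hj.2
  rw [hcrit j hj.1 hj.2]
  exact div_nonneg hα (by linarith)

theorem crit_lt_half (hα : 0 ≤ α) (hα1 : α < 1)
    (hcrit : ∀ j, 1 ≤ j → j ≤ n → crit j = α / ((n : ℝ) - (j : ℝ) + 1 + α)) {j : ℕ}
    (hj : j ∈ Set.Icc 1 n) : crit j < 1 / 2 := by
  have : (j : ℝ) ≤ n := by exact_mod_cast hj.2
  rw [hcrit j hj.1 hj.2, div_lt_iff₀ (by linarith)]
  linarith

theorem crit_succ_div_one_sub (hα : 0 ≤ α)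
    (hcrit : ∀ j, 1 ≤ j → j ≤ n → crit j = α / ((n : ℝ) - (j : ℝ) + 1 + α)) {k : ℕ} (hk : k < n) :
    crit (k + 1) / (1 - crit (k + 1)) = α / ((n : ℝ) - k) := by
  have hnk : (0 : ℝ) < n - k := by
    have : (k : ℝ) + 1 ≤ n := by exact_mod_cast hk
    linarith
  rw [hcrit (k + 1) (by omega) hk, Nat.cast_add_one,
    show (n : ℝ) - (k + 1) + 1 + α = n - k + α by ring]
  have hd : (n : ℝ) - k + α ≠ 0 := by linarith
  rw [one_sub_div hd, add_sub_cancel_right, div_div_div_cancel_right₀ hd]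

end CriticalValues

open scoped Classical

theorem holm_type_stepdown_fwer_control_general
    {Ω : Type*} [MeasurableSpace Ω] (μ : Measure Ω) [IsProbabilityMeasure μ]
    (n : ℕ) (α : ℝ) (hα : 0 < α) (hα1 : α < 1)
    (P : Fin n → Ω → ℝ)
    (hmeas : ∀ i, Measurable (P i))
    (hA2 : ∀ i, ∀ p p' : ℝ, 0 ≤ p → p ≤ p' → p' ≤ 1 →
      ENNReal.ofReal p' * μ {ω | P i ω ≤ p} ≤
        ENNReal.ofReal p * μ {ω | P i ω ≤ p'})
    (hA3 : ProbabilityTheory.iIndepFun P μ)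
    (pval : (Fin n ⊕ Fin n) → Ω → ℝ)
    (hpvalT : ∀ i, pval (Sum.inl i) = P i)
    (hpvalF : ∀ i ω, pval (Sum.inr i) ω = 1 - P i ω)
    -- critical values α_j = α/(n − j + 1 + α), 1-based
    (crit : ℕ → ℝ)
    (hcrit : ∀ j, 1 ≤ j → j ≤ n → crit j = α / ((n : ℝ) - (j : ℝ) + 1 + α))
    -- i* of the stepdown procedure
    (istar : Ω → ℕ)
    (histar : ∀ ω, istar ω = (Finset.range (n + 1)).sup (fun i =>
      if ∀ j ∈ Finset.Icc 1 i,
          j ≤ (Finset.univ.filter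
            (fun k : Fin n ⊕ Fin n => pval k ω ≤ crit j)).card
        then i else 0)) :
    μ {ω | ∃ i : Fin n, 1 ≤ istar ω ∧ P i ω ≤ crit (istar ω)} ≤
      ENNReal.ofReal α := by
  have hmono : MonotoneOn crit (Set.Icc 1 (Fintype.card (Fin n))) := by
    simpa using crit_monotoneOn hα.le hcrit
  have hc (j : ℕ) (hj : j ∈ Set.Icc 1 (Fintype.card (Fin n))) : 0 ≤ crit j ∧ crit j < 1 / 2 := by
    rw [Fintype.card_fin] at hj
    exact ⟨crit_nonneg hα.le hcrit hj, crit_lt_half hα.le hα1 hcrit hj⟩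
  have hreject : {ω | ∃ i, 1 ≤ istar ω ∧ P i ω ≤ crit (istar ω)} ⊆ ⋃ i, ⋃ k ∈ range n,
      {ω | looIndex crit (fun j => P j ω) i = k} ∩ {ω | P i ω ≤ crit (k + 1)} := by
    rintro ω ⟨i, h1, hi⟩
    have hpval : (fun x => pval x ω) = Sum.elim (fun j => P j ω) fun j => 1 - P j ω := by
      funext x
      cases x <;> simp [hpvalT, hpvalF]
    have hr : istar ω = stepdownIndex crit n univ (fun x => pval x ω) :=
      (histar ω).trans (by convert sup_range_succ_ite_eq_stepdownIndex crit n univ _)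
    rw [hr, hpval] at h1 hi
    obtain ⟨i₀, hi₀⟩ := exists_le_crit_looIndex_succ hmono (fun j hj => (hc j hj).2)
      (by rwa [Fintype.card_fin]) (by rwa [Fintype.card_fin])
    simp only [Set.mem_iUnion]
    exact ⟨i₀, _, by simpa using looIndex_lt_card i₀, rfl, hi₀⟩
  calc μ {ω | ∃ i : Fin n, 1 ≤ istar ω ∧ P i ω ≤ crit (istar ω)}
      ≤ ∑ i, ∑ k ∈ range n,
          μ ({ω | looIndex crit (fun j => P j ω) i = k} ∩ {ω | P i ω ≤ crit (k + 1)}) :=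
        (measure_mono hreject).trans ((measure_iUnion_fintype_le _ _).trans
          (sum_le_sum fun i _ => measure_biUnion_finset_le _ _))
    _ ≤ ENNReal.ofReal α := by
        simpa using sum_sum_measure_looIndex_le_ofReal hmeas hA3 hA2 hα.le hmono hc
          (by simpa using fun k hk => crit_succ_div_one_sub hα.le hcrit hk)

/-- The stepdown procedure with critical values
αᵢ = α/(n − i + 1 + α), i = 1,…,n, applied to the 2n one-sided p-values
(true nulls Pᵢ, false nulls 1 − Pᵢ) strongly controls the FWER at level α
under assumptions A.1, A.2, A.3.  The stepdown procedure rejects the i* smallest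
p-values, where i* = max{i : P₍ⱼ₎ ≤ αⱼ ∀ j ≤ i}; equivalently (using
#{k : P_k ≤ αⱼ} ≥ j for all j ≤ i), a hypothesis is rejected iff i* ≥ 1 and its
p-value is ≤ α_{i*}. -/
theorem holm_type_stepdown_fwer_control
    {Ω : Type*} [MeasurableSpace Ω] (μ : Measure Ω) [IsProbabilityMeasure μ]
    (n : ℕ) (hn : 1 ≤ n) (α : ℝ) (hα : 0 < α) (hα1 : α < 1)
    (θ : Fin n → ℝ) (P : Fin n → Ω → ℝ)
    (hmeas : ∀ i, Measurable (P i))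
    (hA1 : ∀ i, ∀ p : ℝ, 0 ≤ p → p ≤ 1 →
      μ {ω | P i ω ≤ p} ≤ ENNReal.ofReal p)
    (hA1eq : ∀ i, θ i = 0 → ∀ p : ℝ, 0 ≤ p → p ≤ 1 →
      μ {ω | P i ω ≤ p} = ENNReal.ofReal p)
    (hA2 : ∀ i, ∀ p p' : ℝ, 0 ≤ p → p ≤ p' → p' ≤ 1 →
      ENNReal.ofReal p' * μ {ω | P i ω ≤ p} ≤
        ENNReal.ofReal p * μ {ω | P i ω ≤ p'})
    (hA3 : ProbabilityTheory.iIndepFun P μ)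
    (pval : (Fin n ⊕ Fin n) → Ω → ℝ)
    (hpvalT : ∀ i, pval (Sum.inl i) = P i)
    (hpvalF : ∀ i ω, pval (Sum.inr i) ω = 1 - P i ω)
    -- critical values α_j = α/(n − j + 1 + α), 1-based
    (crit : ℕ → ℝ)
    (hcrit : ∀ j, 1 ≤ j → j ≤ n → crit j = α / ((n : ℝ) - (j : ℝ) + 1 + α))
    -- i* of the stepdown procedure
    (istar : Ω → ℕ)
    (histar : ∀ ω, istar ω = (Finset.range (n + 1)).sup (fun i =>
      if ∀ j ∈ Finset.Icc 1 i,
          j ≤ (Finset.univ.filter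
            (fun k : Fin n ⊕ Fin n => pval k ω ≤ crit j)).card
        then i else 0)) :
    μ {ω | ∃ i : Fin n, 1 ≤ istar ω ∧ P i ω ≤ crit (istar ω)} ≤
      ENNReal.ofReal α :=
  holm_type_stepdown_fwer_control_general μ n α hα hα1 P hmeas hA2 hA3 pval hpvalT hpvalF crit hcrit
    istar histar
end

section
/- The Benjamini–Hochberg-type stepup procedure with critical values α_i = iα/n, i = 1,...,n, applied to the 2n one-sided p-values (P₁,...,P_{2n}) with P_{n+i} = 1 − P_i, controls the FDR at level α under assumptions A.1 and A.3: for every parameter vector θ, E_θ[V₁/max(R₁,1)] ≤ α, where V₁ is the number of rejected true nulls and R₁ the total number of rejections. -/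
/-!
For a true null `m`, let `ρₘ` be the stepup index computed from the other `n - 1` pairs together
with one p-value that is always counted. Whenever `Pₘ` is rejected, the stepup index `R` equals
`ρₘ`: if `1 - Pₘ` were rejected too, the critical value `Rα/n` would be at least `1/2`, so a member
of every pair lies below it. Hence `V/R ≤ ∑ₘ 1{Pₘ ≤ ρₘα/n} / ρₘ`, and as `ρₘ` is a function of the
other pairs it is independent of `Pₘ`, so by A.1 each summand has expectation at most
`∑ᵣ Pr(ρₘ = r) · (rα/n)/r ≤ α/n`.
-/

open MeasureTheory Finset

def stepUp (n : ℕ) (D : ℕ → ℕ) : ℕ :=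
  (range (n + 1)).sup fun i => if i ≤ D i then i else 0

section StepUp

variable {n : ℕ} {D D' : ℕ → ℕ}

lemma stepUp_le : stepUp n D ≤ n :=
  Finset.sup_le fun i hi => by split_ifs <;> grind

lemma le_stepUp {i : ℕ} (hin : i ≤ n) (hi : i ≤ D i) : i ≤ stepUp n D := by
  have := le_sup (f := fun i => if i ≤ D i then i else 0)
    (mem_range.mpr (Nat.lt_succ_of_le hin))
  simpa [stepUp, hi] using this

lemma stepUp_le_apply : stepUp n D ≤ D (stepUp n D) := by
  obtain ⟨i, -, hi⟩ := exists_mem_eq_sup (range (n + 1)) nonempty_range_add_one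
    fun i => if i ≤ D i then i else 0
  rw [stepUp, hi]
  split_ifs with h <;> simp [h]

lemma stepUp_eq_of_le {r : ℕ} (hr : stepUp n D = r) (hD' : r ≤ D' r)
    (hle : ∀ j, r ≤ j → j ≤ n → D' j ≤ D j) : stepUp n D' = r := by
  subst hr
  have hge : stepUp n D ≤ stepUp n D' := le_stepUp stepUp_le hD'
  exact le_antisymm (le_stepUp stepUp_le (stepUp_le_apply.trans (hle _ hge stepUp_le))) hge

lemma measurable_stepUp {β : Type*} [MeasurableSpace β] {D : β → ℕ → ℕ}
    (hD : ∀ j, Measurable fun b => D b j) : Measurable fun b => stepUp n (D b) := by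
  simp only [stepUp, ← sup'_eq_sup nonempty_range_add_one]
  refine Finset.measurable_range_sup'' fun j _ => ?_
  exact Measurable.ite (measurableSet_le measurable_const (hD j)) measurable_const measurable_const

end StepUp

lemma card_filter_div_max_le {ι κ : Type*} [Fintype ι] [Fintype κ] (A : ι → Prop) (B : κ → Prop)
    [DecidablePred A] [DecidablePred B] {r : ℕ} (hr : r ≤ #{k | B k}) :
    (#{i | 1 ≤ r ∧ A i} : ℝ) / (max #{k | 1 ≤ r ∧ B k} 1 : ℕ) ≤ #{i | A i} / r := by
  rcases Nat.eq_zero_or_pos r with rfl | hr0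
  · simp
  · simp only [Nat.one_le_iff_ne_zero.mpr hr0.ne', true_and]
    have : (r : ℝ) ≤ (max #{k | B k} 1 : ℕ) := by exact_mod_cast hr.trans (le_max_left _ _)
    gcongr

noncomputable def pairHits (y c : ℝ) : ℕ := (if y ≤ c then 1 else 0) + (if 1 - y ≤ c then 1 else 0)

noncomputable def pairCount {κ : Type*} [Fintype κ] (x : κ → ℝ) (c : ℝ) : ℕ := ∑ i, pairHits (x i) c

section Pairs

variable {κ : Type*} [Fintype κ] {y c : ℝ}

lemma one_le_pairHits_of_le (h : y ≤ c) : 1 ≤ pairHits y c := by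
  unfold pairHits; split_ifs <;> omega

lemma one_le_pairHits_of_one_le_two_mul (h : 1 ≤ 2 * c) : 1 ≤ pairHits y c := by
  unfold pairHits; split_ifs <;> first | omega | linarith

lemma pairHits_eq_one (h : y ≤ c) (h' : ¬ 1 ≤ 2 * c) : pairHits y c = 1 := by
  unfold pairHits; split_ifs <;> first | rfl | linarith

lemma card_le_pairCount (x : κ → ℝ) (h : 1 ≤ 2 * c) : Fintype.card κ ≤ pairCount x c := by
  simpa [pairCount] using Finset.card_nsmul_le_sum univ (fun i => pairHits (x i) c) 1
    fun i _ => one_le_pairHits_of_one_le_two_mul h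

lemma card_sumElim_le_eq_pairCount (x : κ → ℝ) (c : ℝ) :
    #{k | Sum.elim x (fun i => 1 - x i) k ≤ c} = pairCount x c := by
  rw [card_filter, Fintype.sum_sum_type, pairCount, ← sum_add_distrib]
  rfl

lemma pairCount_eq_restrict_erase_add [DecidableEq κ] (x : κ → ℝ) (c : ℝ) (m : κ) :
    pairCount x c = pairCount ((univ.erase m).restrict x) c + pairHits (x m) c := by
  rw [pairCount, pairCount, ← add_sum_erase _ _ (mem_univ m), add_comm]
  exact congrArg (· + _) (sum_coe_sort (univ.erase m) fun i => pairHits (x i) c).symm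

lemma measurable_pairCount : Measurable fun x : κ → ℝ => pairCount x c := by
  unfold pairCount pairHits
  refine Finset.measurable_sum _ fun i _ => Measurable.add ?_ ?_ <;>
    refine Measurable.ite (measurableSet_le (by fun_prop) measurable_const) measurable_const
      measurable_const

end Pairs

noncomputable def pairStepUp {κ : Type*} [Fintype κ] (n : ℕ) (c : ℝ) (x : κ → ℝ) : ℕ :=
  stepUp n fun j => pairCount x (c * j)

/-- The stepup index as seen when `x m` is rejected and its partner `1 - x m` is not. -/
noncomputable def looStepUp {n : ℕ} (c : ℝ) (x : Fin n → ℝ) (m : Fin n) : ℕ :=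
  stepUp n fun j => pairCount ((univ.erase m).restrict x) (c * j) + 1

section LeaveOneOut

variable {n : ℕ} {c : ℝ}

lemma looStepUp_eq_pairStepUp (hc : 0 ≤ c) (x : Fin n → ℝ) (m : Fin n)
    (hm : x m ≤ c * pairStepUp n c x) : looStepUp c x m = pairStepUp n c x := by
  obtain ⟨r, hr⟩ : ∃ r, pairStepUp n c x = r := ⟨_, rfl⟩
  have hrn : r ≤ n := hr ▸ stepUp_le
  have hsplit := pairCount_eq_restrict_erase_add x
  rw [hr] at hm ⊢
  refine stepUp_eq_of_le hr ?_ fun j hj _ => ?_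
  · by_cases h : 1 ≤ 2 * (c * r)
    · have hcard := card_le_pairCount ((univ.erase m).restrict x) h
      simp only [Fintype.card_coe, card_erase_of_mem (mem_univ m), card_univ,
        Fintype.card_fin] at hcard
      have : 0 < n := m.pos
      omega
    · have hrD : r ≤ pairCount x (c * r) := hr ▸ stepUp_le_apply
      rwa [hsplit _ m, pairHits_eq_one hm h] at hrD
  · have hj' : c * r ≤ c * j := by gcongr
    have := one_le_pairHits_of_le (hm.trans hj')
    rw [hsplit _ m]
    omega

lemma measurable_looStepUp_restrict (c : ℝ) (m : Fin n) :
    Measurable fun y : (univ.erase m) → ℝ => stepUp n fun j => pairCount y (c * j) + 1 :=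
  measurable_stepUp fun _ => measurable_pairCount.add_const _

end LeaveOneOut

noncomputable def rejectionShare (c x : ℝ) (r : ℕ) : ℝ := if x ≤ c * r then (r : ℝ)⁻¹ else 0

lemma rejectionShare_nonneg (c x : ℝ) (r : ℕ) : 0 ≤ rejectionShare c x r := by
  unfold rejectionShare; split_ifs <;> positivity

lemma rejectionShare_le_one (c x : ℝ) (r : ℕ) : rejectionShare c x r ≤ 1 := by
  unfold rejectionShare
  split_ifs
  · exact Nat.cast_inv_le_one r
  · exact zero_le_one

lemma card_div_pairStepUp_le_sum_rejectionShare {n : ℕ} {c : ℝ} (hc : 0 ≤ c) (x : Fin n → ℝ) :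
    (#{i | x i ≤ c * pairStepUp n c x} : ℝ) / pairStepUp n c x ≤
      ∑ m, rejectionShare c (x m) (looStepUp c x m) := by
  rw [natCast_card_filter, div_eq_mul_inv, sum_mul]
  refine sum_le_sum fun m _ => ?_
  by_cases hm : x m ≤ c * pairStepUp n c x
  · simp [rejectionShare, looStepUp_eq_pairStepUp hc x m hm, hm]
  · simpa [hm] using rejectionShare_nonneg c (x m) (looStepUp c x m)

lemma fdp_le_sum_rejectionShare {n : ℕ} {c : ℝ} (hc : 0 ≤ c) (x : Fin n → ℝ) :
    (#{i | 1 ≤ pairStepUp n c x ∧ x i ≤ c * pairStepUp n c x} : ℝ) /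
        (max #{k | 1 ≤ pairStepUp n c x ∧
          Sum.elim x (fun i => 1 - x i) k ≤ c * pairStepUp n c x} 1 : ℕ) ≤
      ∑ m, rejectionShare c (x m) (looStepUp c x m) := by
  refine (card_filter_div_max_le _ _ ?_).trans (card_div_pairStepUp_le_sum_rejectionShare hc x)
  rw [card_sumElim_le_eq_pairCount]
  exact stepUp_le_apply

section Probability

open ProbabilityTheory

variable {Ω : Type*} [MeasurableSpace Ω] {μ : Measure Ω} {X : Ω → ℝ} {N : Ω → ℕ} {c : ℝ}

lemma measurable_rejectionShare (c : ℝ) :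
    Measurable fun z : ℝ × ℕ => rejectionShare c z.1 z.2 :=
  measurable_from_prod_countable_left fun r => by
    simp only [rejectionShare]
    exact Measurable.ite measurableSet_Iic measurable_const measurable_const

lemma integrable_rejectionShare [IsFiniteMeasure μ] (hX : Measurable X) (hN : Measurable N) :
    Integrable (fun ω => rejectionShare c (X ω) (N ω)) μ :=
  Integrable.of_bound ((measurable_rejectionShare c).comp (hX.prodMk hN)).aestronglyMeasurable 1
    (ae_of_all _ fun ω => by
      rw [Real.norm_of_nonneg (rejectionShare_nonneg ..)]
      exact rejectionShare_le_one ..)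

lemma measure_le_ofReal_of_le_one [IsProbabilityMeasure μ]
    (hX : ∀ p : ℝ, 0 ≤ p → p ≤ 1 → μ {ω | X ω ≤ p} ≤ ENNReal.ofReal p) {p : ℝ} (hp : 0 ≤ p) :
    μ {ω | X ω ≤ p} ≤ ENNReal.ofReal p := by
  rcases le_or_gt p 1 with hp1 | hp1
  · exact hX p hp hp1
  · exact prob_le_one.trans (ENNReal.one_le_ofReal.mpr hp1.le)

lemma lintegral_ofReal_rejectionShare_le_of_measure_Iic {ν : Measure ℝ} (hc : 0 ≤ c)
    (hν : ∀ p : ℝ, 0 ≤ p → ν (Set.Iic p) ≤ ENNReal.ofReal p) (r : ℕ) :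
    ∫⁻ x, ENNReal.ofReal (rejectionShare c x r) ∂ν ≤ ENNReal.ofReal c := by
  have hind : (fun x => ENNReal.ofReal (rejectionShare c x r)) =
      (Set.Iic (c * r)).indicator fun _ => ENNReal.ofReal (r : ℝ)⁻¹ := by
    ext x; by_cases hx : x ≤ c * r <;> simp [rejectionShare, hx]
  rw [hind, lintegral_indicator_const measurableSet_Iic]
  calc ENNReal.ofReal (r : ℝ)⁻¹ * ν (Set.Iic (c * r))
      ≤ ENNReal.ofReal (r : ℝ)⁻¹ * ENNReal.ofReal (c * r) := by
        gcongr; exact hν _ (by positivity)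
    _ = ENNReal.ofReal ((r : ℝ)⁻¹ * (c * r)) := (ENNReal.ofReal_mul (by positivity)).symm
    _ ≤ ENNReal.ofReal c := by
        gcongr
        rcases Nat.eq_zero_or_pos r with rfl | hr
        · simpa using hc
        · field_simp; rfl

lemma lintegral_ofReal_rejectionShare_le [IsProbabilityMeasure μ] (hX : Measurable X)
    (hN : Measurable N) (hXN : IndepFun X N μ) (hc : 0 ≤ c)
    (hXle : ∀ p : ℝ, 0 ≤ p → μ {ω | X ω ≤ p} ≤ ENNReal.ofReal p) :
    ∫⁻ ω, ENNReal.ofReal (rejectionShare c (X ω) (N ω)) ∂μ ≤ ENNReal.ofReal c := by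
  have hf : Measurable fun z : ℝ × ℕ => ENNReal.ofReal (rejectionShare c z.1 z.2) :=
    ENNReal.measurable_ofReal.comp (measurable_rejectionShare c)
  have hXIic (p : ℝ) (hp : 0 ≤ p) : μ.map X (Set.Iic p) ≤ ENNReal.ofReal p := by
    rw [Measure.map_apply hX measurableSet_Iic]
    exact hXle p hp
  have : IsProbabilityMeasure (μ.map N) := Measure.isProbabilityMeasure_map hN.aemeasurable
  calc ∫⁻ ω, ENNReal.ofReal (rejectionShare c (X ω) (N ω)) ∂μ
      = ∫⁻ z, ENNReal.ofReal (rejectionShare c z.1 z.2) ∂((μ.map X).prod (μ.map N)) := by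
        rw [← (indepFun_iff_map_prod_eq_prod_map_map hX.aemeasurable hN.aemeasurable).1 hXN,
          lintegral_map hf (hX.prodMk hN)]
    _ = ∫⁻ r, ∫⁻ x, ENNReal.ofReal (rejectionShare c x r) ∂(μ.map X) ∂(μ.map N) :=
        lintegral_prod_symm _ hf.aemeasurable
    _ ≤ ∫⁻ _, ENNReal.ofReal c ∂(μ.map N) :=
        lintegral_mono (lintegral_ofReal_rejectionShare_le_of_measure_Iic hc hXIic)
    _ = ENNReal.ofReal c := by simp

lemma integral_rejectionShare_le [IsProbabilityMeasure μ] (hX : Measurable X)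
    (hN : Measurable N) (hXN : IndepFun X N μ) (hc : 0 ≤ c)
    (hXle : ∀ p : ℝ, 0 ≤ p → μ {ω | X ω ≤ p} ≤ ENNReal.ofReal p) :
    ∫ ω, rejectionShare c (X ω) (N ω) ∂μ ≤ c := by
  rw [integral_eq_lintegral_of_nonneg_ae (ae_of_all _ fun ω => rejectionShare_nonneg ..)
    (integrable_rejectionShare hX hN).aestronglyMeasurable]
  exact ENNReal.toReal_le_of_le_ofReal hc (lintegral_ofReal_rejectionShare_le hX hN hXN hc hXle)

lemma indepFun_looStepUp {n : ℕ} {P : Fin n → Ω → ℝ} (hP : ∀ i, Measurable (P i))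
    (hind : iIndepFun P μ) (c : ℝ) (m : Fin n) :
    IndepFun (P m) (fun ω => looStepUp c (fun i => P i ω) m) μ := by
  exact (hind.indepFun_finset {m} (univ.erase m) (by simp) hP).comp
    (measurable_pi_apply ⟨m, mem_singleton_self m⟩) (measurable_looStepUp_restrict c m)

lemma measurable_looStepUp {n : ℕ} {P : Fin n → Ω → ℝ} (hP : ∀ i, Measurable (P i)) (c : ℝ)
    (m : Fin n) : Measurable fun ω => looStepUp c (fun i => P i ω) m :=
  (measurable_looStepUp_restrict c m).comp (measurable_pi_lambda _ fun i => hP i)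

end Probability

theorem bh_type_stepup_fdr_control_general
    {Ω : Type*} [MeasurableSpace Ω] (μ : Measure Ω) [IsProbabilityMeasure μ]
    (n : ℕ) (α : ℝ) (hα : 0 < α)
    (P : Fin n → Ω → ℝ)
    (hmeas : ∀ i, Measurable (P i))
    -- A.1: true null p-values are stochastically larger than U(0,1)
    (hA1 : ∀ i, ∀ p : ℝ, 0 ≤ p → p ≤ 1 →
      μ {ω | P i ω ≤ p} ≤ ENNReal.ofReal p)
    -- A.3: independence of the statistics, hence of the pairs (Pᵢ, 1 − Pᵢ)
    (hA3 : ProbabilityTheory.iIndepFun P μ)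
    (pval : (Fin n ⊕ Fin n) → Ω → ℝ)
    (hpvalT : ∀ i, pval (Sum.inl i) = P i)
    (hpvalF : ∀ i ω, pval (Sum.inr i) ω = 1 - P i ω)
    -- R = the stepup index max{i ≤ n : #{k : p_k ≤ iα/n} ≥ i}
    (R : Ω → ℕ)
    (hR : ∀ ω, R ω = (Finset.range (n + 1)).sup (fun i =>
      if i ≤ (Finset.univ.filter
          (fun k : Fin n ⊕ Fin n => pval k ω ≤ (i : ℝ) * α / (n : ℝ))).card
        then i else 0))
    -- V₁ = number of rejected true nulls, R₁ = total number of rejections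
    (V₁ R₁ : Ω → ℕ)
    (hV₁ : ∀ ω, V₁ ω = (Finset.univ.filter
      (fun i : Fin n => 1 ≤ R ω ∧ P i ω ≤ (R ω : ℝ) * α / (n : ℝ))).card)
    (hR₁ : ∀ ω, R₁ ω = (Finset.univ.filter
      (fun k : Fin n ⊕ Fin n =>
        1 ≤ R ω ∧ pval k ω ≤ (R ω : ℝ) * α / (n : ℝ))).card) :
    ∫ ω, (V₁ ω : ℝ) / ((max (R₁ ω) 1 : ℕ) : ℝ) ∂μ ≤ α := by
  set c := α / n
  have hc : 0 ≤ c := by positivity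
  have hcrit (j : ℕ) : (j : ℝ) * α / n = c * j := by ring
  have hpval (k : Fin n ⊕ Fin n) (ω : Ω) :
      pval k ω = Sum.elim (fun i => P i ω) (fun i => 1 - P i ω) k := by
    cases k <;> simp [hpvalT, hpvalF]
  have hRω (ω : Ω) : R ω = pairStepUp n c fun i => P i ω := by
    simp only [hR, hpval, hcrit, card_sumElim_le_eq_pairCount]
    rfl
  have hfdp (ω : Ω) : (V₁ ω : ℝ) / ((max (R₁ ω) 1 : ℕ) : ℝ) ≤
      ∑ m, rejectionShare c (P m ω) (looStepUp c (fun i => P i ω) m) := by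
    simp only [hV₁, hR₁, hpval, hcrit, hRω]
    exact fdp_le_sum_rejectionShare hc _
  have hint (m : Fin n) := integrable_rejectionShare (μ := μ) (c := c) (hmeas m)
    (measurable_looStepUp hmeas c m)
  calc ∫ ω, (V₁ ω : ℝ) / ((max (R₁ ω) 1 : ℕ) : ℝ) ∂μ
      ≤ ∫ ω, ∑ m, rejectionShare c (P m ω) (looStepUp c (fun i => P i ω) m) ∂μ :=
        integral_mono_of_nonneg (ae_of_all _ fun ω => by positivity)
          (integrable_finsetSum _ fun m _ => hint m) (ae_of_all _ hfdp)
    _ = ∑ m, ∫ ω, rejectionShare c (P m ω) (looStepUp c (fun i => P i ω) m) ∂μ :=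
        integral_finsetSum _ fun m _ => hint m
    _ ≤ ∑ _m : Fin n, c := sum_le_sum fun m _ =>
        integral_rejectionShare_le (hmeas m) (measurable_looStepUp hmeas c m)
          (indepFun_looStepUp hmeas hA3 c m) hc fun _ hp => measure_le_ofReal_of_le_one (hA1 m) hp
    _ ≤ α := by
        rcases Nat.eq_zero_or_pos n with rfl | hn
        · simpa using hα.le
        · rw [sum_const, card_univ, Fintype.card_fin, nsmul_eq_mul, mul_div_cancel₀ _ (by positivity)]

/-- The BH-type stepup procedure with critical values αᵢ = iα/n,
i = 1,…,n, applied to the 2n one-sided p-values (true nulls Pᵢ, false nulls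
1 − Pᵢ), controls the FDR at level α under assumptions A.1 and A.3:
E_θ[V₁/max(R₁,1)] ≤ α.  The stepup procedure rejects the R smallest p-values
where R = max{i : #{k : p_k ≤ iα/n} ≥ i}; a hypothesis is rejected iff R ≥ 1
and its p-value is ≤ Rα/n. -/
theorem bh_type_stepup_fdr_control
    {Ω : Type*} [MeasurableSpace Ω] (μ : Measure Ω) [IsProbabilityMeasure μ]
    (n : ℕ) (hn : 1 ≤ n) (α : ℝ) (hα : 0 < α) (hα1 : α < 1)
    (θ : Fin n → ℝ) (P : Fin n → Ω → ℝ)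
    (hmeas : ∀ i, Measurable (P i))
    -- A.1: true null p-values are stochastically larger than U(0,1)
    (hA1 : ∀ i, ∀ p : ℝ, 0 ≤ p → p ≤ 1 →
      μ {ω | P i ω ≤ p} ≤ ENNReal.ofReal p)
    -- A.3: independence of the statistics, hence of the pairs (Pᵢ, 1 − Pᵢ)
    (hA3 : ProbabilityTheory.iIndepFun P μ)
    (pval : (Fin n ⊕ Fin n) → Ω → ℝ)
    (hpvalT : ∀ i, pval (Sum.inl i) = P i)
    (hpvalF : ∀ i ω, pval (Sum.inr i) ω = 1 - P i ω)
    -- R = the stepup index max{i ≤ n : #{k : p_k ≤ iα/n} ≥ i}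
    (R : Ω → ℕ)
    (hR : ∀ ω, R ω = (Finset.range (n + 1)).sup (fun i =>
      if i ≤ (Finset.univ.filter
          (fun k : Fin n ⊕ Fin n => pval k ω ≤ (i : ℝ) * α / (n : ℝ))).card
        then i else 0))
    -- V₁ = number of rejected true nulls, R₁ = total number of rejections
    (V₁ R₁ : Ω → ℕ)
    (hV₁ : ∀ ω, V₁ ω = (Finset.univ.filter
      (fun i : Fin n => 1 ≤ R ω ∧ P i ω ≤ (R ω : ℝ) * α / (n : ℝ))).card)
    (hR₁ : ∀ ω, R₁ ω = (Finset.univ.filter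
      (fun k : Fin n ⊕ Fin n =>
        1 ≤ R ω ∧ pval k ω ≤ (R ω : ℝ) * α / (n : ℝ))).card) :
    ∫ ω, (V₁ ω : ℝ) / ((max (R₁ ω) 1 : ℕ) : ℝ) ∂μ ≤ α :=
  bh_type_stepup_fdr_control_general μ n α hα P hmeas hA1 hA3 pval hpvalT hpvalF R hR V₁ R₁ hV₁ hR₁
end

section
/- In the key FDR computation, for each true null i and each r ∈ {1,...,n}: Pr_θ(R₁ = r, P_i ≤ rα/n) = Pr_θ(R₁^{(−i)} = r − 1, P_i ≤ rα/n), where R₁^{(−i)} is the number of rejections when applying the stepup procedure with critical values jα/n, j = 2,...,n, to the 2(n−1) p-values excluding the pair (P_i, 1 − P_i). Consequently, under independence and A.1, Σ_{r=1}^n (1/r) Pr_θ(R₁ = r, P_i ≤ rα/n) ≤ α/n. -/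
/-!
On the event `P i ≤ r α / n`, the p-value `P i` lies below every critical value `j α / n` with
`j ≥ r`, while `1 - P i` lies above all of them unless `1 - P i ≤ α`. In the first case the pair
`(P i, 1 - P i)` adds exactly one to the rejection count at every level `j ≥ r`, so the full
step-up index is `r` exactly when the reduced one is `r - 1`. In the second case `α ≥ 1 / 2`, so
every pair has a member below `α` and both procedures reject everything.

The reduced index is a function of the p-values `P j`, `j ≠ i`, hence independent of `P i`, and
A.1 bounds `Pr(R₁⁽⁻ⁱ⁾ = r - 1, P i ≤ r α / n)` by `(r α / n) Pr(R₁⁽⁻ⁱ⁾ = r - 1)`. Summing over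
`r`, the fibres of `R₁⁽⁻ⁱ⁾` have total mass at most one.
-/

open MeasureTheory Finset ProbabilityTheory
open scoped Classical

def stepUpIndex (N : ℕ) (c : ℕ → ℕ) : ℕ :=
  (range (N + 1)).sup fun j => if j ≤ c j then j else 0

theorem stepUpIndex_eq_iff {N r : ℕ} {c : ℕ → ℕ} (hrN : r ≤ N) :
    stepUpIndex N c = r ↔ r ≤ c r ∧ ∀ j, r < j → j ≤ N → c j < j := by
  have hle : ∀ j ∈ range (N + 1), j ≤ c j → j ≤ stepUpIndex N c := fun j hj hjc => by
    have := le_sup (f := fun j => if j ≤ c j then j else 0) hj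
    simp only [if_pos hjc] at this
    exact this
  constructor
  · rintro rfl
    refine ⟨?_, fun j hrj hjN => ?_⟩
    · obtain ⟨j, -, hj⟩ := exists_mem_eq_sup (range (N + 1)) nonempty_range_add_one
        fun j => if j ≤ c j then j else 0
      rw [stepUpIndex, hj]
      split_ifs with hjc <;> omega
    · by_contra! hjc
      exact absurd (hle j (mem_range.2 (by omega)) hjc) (by omega)
  · rintro ⟨hrc, hgt⟩
    refine le_antisymm (Finset.sup_le fun j hj => ?_) (hle r (mem_range.2 (by omega)) hrc)
    rw [mem_range] at hj
    split_ifs with hjc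
    · by_contra! hrj
      exact absurd (hgt j hrj (by omega)) (by omega)
    · exact Nat.zero_le r

theorem stepUpIndex_eq_of_le {N : ℕ} {c : ℕ → ℕ} (h : N ≤ c N) : stepUpIndex N c = N :=
  (stepUpIndex_eq_iff le_rfl).2 ⟨h, fun _ hj hjN => absurd hjN (by omega)⟩

theorem stepUpIndex_eq_iff_of_succ_eq {N r : ℕ} {c c' : ℕ → ℕ} (hr1 : 1 ≤ r) (hrN : r ≤ N)
    (hc : ∀ m, r ≤ m + 1 → m + 1 ≤ N → c (m + 1) = c' m + 1) :
    stepUpIndex N c = r ↔ stepUpIndex (N - 1) c' = r - 1 := by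
  rw [stepUpIndex_eq_iff hrN, stepUpIndex_eq_iff (by omega)]
  have hcr := hc (r - 1) (by omega) (by omega)
  rw [Nat.sub_add_cancel hr1] at hcr
  constructor
  · rintro ⟨hrc, hgt⟩
    refine ⟨by omega, fun m hm hmN => ?_⟩
    have := hc m (by omega) (by omega)
    have := hgt (m + 1) (by omega) (by omega)
    omega
  · rintro ⟨hrc, hgt⟩
    refine ⟨by omega, fun j hj hjN => ?_⟩
    have := hc (j - 1) (by omega) (by omega)
    have := hgt (j - 1) (by omega) (by omega)
    rw [Nat.sub_add_cancel (by omega)] at *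
    omega

theorem card_filter_eq_card_filter_sdiff_pair_add_one {κ : Type*} [Fintype κ] [DecidableEq κ]
    (p : κ → Prop) [DecidablePred p] {a b : κ} (hab : a ≠ b) (ha : p a) (hb : ¬ p b) :
    #{k | p k} = #{k ∈ univ \ {a, b} | p k} + 1 := by
  rw [card_filter, card_filter, ← sum_sdiff (subset_univ {a, b}), sum_pair hab, if_pos ha,
    if_neg hb]

theorem card_le_card_filter_disjSum {ι : Type*} (s : Finset ι) (p : ι ⊕ ι → Prop)
    [DecidablePred p] (h : ∀ j ∈ s, p (.inl j) ∨ p (.inr j)) :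
    #s ≤ #{k ∈ s.disjSum s | p k} := by
  rw [card_filter, sum_disjSum, ← sum_add_distrib, card_eq_sum_ones]
  refine sum_le_sum fun j hj => ?_
  rcases h j hj with h | h <;> simp [h]

def mirror {ι : Type*} (p : ι → ℝ) : ι ⊕ ι → ℝ :=
  Sum.elim p fun j => 1 - p j

section Mirror

variable {ι : Type*} [Fintype ι] [DecidableEq ι]

theorem sdiff_pair_eq_disjSum_erase (i : ι) :
    (univ \ {.inl i, .inr i} : Finset (ι ⊕ ι)) = (univ.erase i).disjSum (univ.erase i) := by
  ext (j | j) <;> simp [eq_comm]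

theorem stepUpIndex_mirror_eq_iff (p : ι → ℝ) {t : ℕ → ℝ} (ht : Monotone t) (i : ι)
    {N r : ℕ} (hN : N ≤ Fintype.card ι) (hr1 : 1 ≤ r) (hrN : r ≤ N) (hpi : p i ≤ t r) :
    stepUpIndex N (fun j => #{k | mirror p k ≤ t j}) = r ↔
      stepUpIndex (N - 1)
        (fun m => #{k ∈ univ \ {.inl i, .inr i} | mirror p k ≤ t (m + 1)}) = r - 1 := by
  by_cases hdeg : 1 - p i ≤ t N
  · have hcover : ∀ j, mirror p (.inl j) ≤ t N ∨ mirror p (.inr j) ≤ t N := fun j => by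
      have := ht hrN
      by_contra! h
      simp only [mirror, Sum.elim_inl, Sum.elim_inr] at h
      linarith
    have hfull : stepUpIndex N (fun j => #{k | mirror p k ≤ t j}) = N := by
      refine stepUpIndex_eq_of_le (hN.trans ?_)
      simpa using card_le_card_filter_disjSum univ _ fun j _ => hcover j
    have hreduced : stepUpIndex (N - 1)
        (fun m => #{k ∈ univ \ {.inl i, .inr i} | mirror p k ≤ t (m + 1)}) = N - 1 := by
      refine stepUpIndex_eq_of_le ?_
      rw [Nat.sub_add_cancel (by omega), sdiff_pair_eq_disjSum_erase]
      refine le_trans ?_ (card_le_card_filter_disjSum _ _ fun j _ => hcover j)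
      rw [card_erase_of_mem (mem_univ i), card_univ]
      omega
    rw [hfull, hreduced]
    omega
  · refine stepUpIndex_eq_iff_of_succ_eq hr1 hrN fun m hrm hmN => ?_
    refine card_filter_eq_card_filter_sdiff_pair_add_one _ Sum.inl_ne_inr (hpi.trans (ht hrm)) ?_
    have := ht hmN
    simp only [mirror, Sum.elim_inr]
    linarith

end Mirror

section Measurability

variable {Ω : Type*} {m : MeasurableSpace Ω}

theorem measurable_stepUpIndex (N : ℕ) {c : ℕ → Ω → ℕ} (hc : ∀ j, Measurable (c j)) :
    Measurable fun ω => stepUpIndex N fun j => c j ω := by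
  simp only [stepUpIndex, ← sup'_eq_sup nonempty_range_add_one]
  exact Finset.measurable_range_sup'' fun j _ =>
    Measurable.ite (hc j MeasurableSet.of_discrete) measurable_const measurable_const

theorem measurable_card_filter_le {κ : Type*} (s : Finset κ) {q : κ → Ω → ℝ}
    (hq : ∀ k ∈ s, Measurable (q k)) (t : ℝ) :
    Measurable fun ω => #{k ∈ s | q k ω ≤ t} := by
  simp only [card_filter]
  exact Finset.measurable_sum s fun k hk =>
    Measurable.ite (measurableSet_le (hq k hk) measurable_const) measurable_const measurable_const

theorem measurable_card_filter_mirror_sdiff_le {ι : Type*} [Fintype ι] [DecidableEq ι]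
    {P : ι → Ω → ℝ} (i : ι) (hP : ∀ j ≠ i, Measurable (P j)) (t : ℝ) :
    Measurable fun ω => #{k ∈ univ \ {.inl i, .inr i} | mirror (fun j => P j ω) k ≤ t} := by
  refine measurable_card_filter_le _ ?_ t
  rintro (j | j) hj
  · exact hP j (by rintro rfl; simp at hj)
  · exact measurable_const.sub (hP j (by rintro rfl; simp at hj))

theorem measurable_biSup_comap {ι β : Type*} [mβ : MeasurableSpace β] (f : ι → Ω → β)
    {S : Set ι} {j : ι} (hj : j ∈ S) : Measurable[⨆ j ∈ S, mβ.comap (f j)] (f j) :=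
  (comap_measurable (f j)).mono (le_iSup₂ (f := fun j (_ : j ∈ S) => mβ.comap (f j)) j hj) le_rfl

end Measurability

theorem ProbabilityTheory.iIndepFun.indepFun_of_measurable_iSup_compl {Ω ι β γ : Type*}
    {mΩ : MeasurableSpace Ω} {μ : Measure Ω} [mβ : MeasurableSpace β] [MeasurableSpace γ]
    {f : ι → Ω → β} (hf : iIndepFun f μ) (hmeas : ∀ j, Measurable (f j)) (i : ι) {g : Ω → γ}
    (hg : Measurable[⨆ j ∈ ({i}ᶜ : Set ι), mβ.comap (f j)] g) :
    IndepFun (f i) g μ := by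
  rw [IndepFun_iff_Indep]
  refine indep_of_indep_of_le (indep_iSup_of_disjoint (fun j => (hmeas j).comap_le) hf
    (S := {i}) disjoint_compl_right) ?_ hg.comap_le
  exact le_iSup₂ (f := fun j (_ : j ∈ ({i} : Set ι)) => mβ.comap (f j)) i rfl

section Probability

variable {Ω : Type*} {mΩ : MeasurableSpace Ω} {μ : Measure Ω}

theorem ProbabilityTheory.IndepFun.measureReal_eq_and_le_le {β : Type*} [MeasurableSpace β]
    [MeasurableSingletonClass β] [IsFiniteMeasure μ] {X : Ω → β} {Y : Ω → ℝ}
    (hXY : IndepFun X Y μ) (a : β) {t : ℝ} (ht : 0 ≤ t)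
    (hY : μ {ω | Y ω ≤ t} ≤ ENNReal.ofReal t) :
    μ.real {ω | X ω = a ∧ Y ω ≤ t} ≤ μ.real (X ⁻¹' {a}) * t := by
  have hYt : μ.real {ω | Y ω ≤ t} ≤ t := ENNReal.toReal_le_of_le_ofReal ht hY
  calc μ.real {ω | X ω = a ∧ Y ω ≤ t} = μ.real (X ⁻¹' {a}) * μ.real {ω | Y ω ≤ t} := by
        rw [measureReal_def, measureReal_def, measureReal_def, ← ENNReal.toReal_mul]
        exact congrArg ENNReal.toReal (hXY.measure_inter_preimage_eq_mul {a} (Set.Iic t)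
          (measurableSet_singleton a) measurableSet_Iic)
    _ ≤ μ.real (X ⁻¹' {a}) * t := mul_le_mul_of_nonneg_left hYt measureReal_nonneg

theorem sum_measureReal_preimage_pred_le_one [IsProbabilityMeasure μ] {X : Ω → ℕ}
    (hX : Measurable X) (n : ℕ) :
    ∑ r ∈ Icc 1 n, μ.real (X ⁻¹' {r - 1}) ≤ 1 := by
  rw [← Ico_add_one_right_eq_Icc, sum_Ico_eq_sum_range, Nat.add_sub_cancel]
  simp only [Nat.add_sub_cancel_left]
  rw [sum_measureReal_preimage_singleton _ fun _ _ => hX (measurableSet_singleton _)]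
  exact measureReal_le_one

theorem sum_one_div_mul_measureReal_le_div [IsProbabilityMeasure μ] {X : Ω → ℕ}
    {Y : Ω → ℝ} (hX : Measurable X) (hXY : IndepFun X Y μ)
    (hY : ∀ p : ℝ, 0 ≤ p → p ≤ 1 → μ {ω | Y ω ≤ p} ≤ ENNReal.ofReal p)
    {α : ℝ} (hα : 0 ≤ α) (hα1 : α ≤ 1) (n : ℕ) :
    ∑ r ∈ Icc 1 n, (1 / (r : ℝ)) * μ.real {ω | X ω = r - 1 ∧ Y ω ≤ r * α / n} ≤ α / n := by
  calc ∑ r ∈ Icc 1 n, (1 / (r : ℝ)) * μ.real {ω | X ω = r - 1 ∧ Y ω ≤ r * α / n}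
      ≤ ∑ r ∈ Icc 1 n, μ.real (X ⁻¹' {r - 1}) * (α / n) := by
        refine sum_le_sum fun r hr => ?_
        obtain ⟨hr1, hrn⟩ := mem_Icc.1 hr
        have hr0 : (0 : ℝ) < r := by exact_mod_cast hr1
        have hn0 : (0 : ℝ) < n := by exact_mod_cast hr1.trans hrn
        have ht0 : 0 ≤ r * α / n := by positivity
        have ht1 : r * α / n ≤ 1 := by
          rw [div_le_one hn0]
          exact (mul_le_mul (by exact_mod_cast hrn) hα1 hα hn0.le).trans_eq (mul_one _)
        calc (1 / (r : ℝ)) * μ.real {ω | X ω = r - 1 ∧ Y ω ≤ r * α / n}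
            ≤ (1 / r) * (μ.real (X ⁻¹' {r - 1}) * (r * α / n)) :=
              mul_le_mul_of_nonneg_left
                (hXY.measureReal_eq_and_le_le _ ht0 (hY _ ht0 ht1)) (by positivity)
          _ = μ.real (X ⁻¹' {r - 1}) * (α / n) := by field_simp
    _ = (∑ r ∈ Icc 1 n, μ.real (X ⁻¹' {r - 1})) * (α / n) := (sum_mul ..).symm
    _ ≤ α / n := mul_le_of_le_one_left (by positivity) (sum_measureReal_preimage_pred_le_one hX n)

end Probability

theorem bh_fdr_key_lemma_general
    {Ω : Type*} [MeasurableSpace Ω] (μ : Measure Ω) [IsProbabilityMeasure μ]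
    (n : ℕ) (α : ℝ) (hα : 0 < α) (hα1 : α < 1)
    (P : Fin n → Ω → ℝ)
    (hmeas : ∀ i, Measurable (P i))
    (hA1 : ∀ i, ∀ p : ℝ, 0 ≤ p → p ≤ 1 →
      μ {ω | P i ω ≤ p} ≤ ENNReal.ofReal p)
    (hA3 : ProbabilityTheory.iIndepFun P μ)
    (pval : (Fin n ⊕ Fin n) → Ω → ℝ)
    (hpvalT : ∀ i, pval (Sum.inl i) = P i)
    (hpvalF : ∀ i ω, pval (Sum.inr i) ω = 1 - P i ω)
    -- the stepup index of the full procedure, which equals the number R₁ of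
    -- rejections: R₁ = max{i ≤ n : #{k : p_k ≤ iα/n} ≥ i}
    (R₁ : Ω → ℕ)
    (hR₁ : ∀ ω, R₁ ω = (Finset.range (n + 1)).sup (fun i =>
      if i ≤ (Finset.univ.filter
          (fun k : Fin n ⊕ Fin n => pval k ω ≤ (i : ℝ) * α / (n : ℝ))).card
        then i else 0))
    -- the reduced stepup procedure dropping the pair (i, n+i), with critical
    -- values (m+1)α/n for m = 1,…,n−1
    (Rminus : Fin n → Ω → ℕ)
    (hRminus : ∀ i ω, Rminus i ω = (Finset.range n).sup (fun m =>
      if m ≤ ((Finset.univ \ {Sum.inl i, Sum.inr i}).filter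
          (fun k : Fin n ⊕ Fin n =>
            pval k ω ≤ ((m + 1 : ℕ) : ℝ) * α / (n : ℝ))).card
        then m else 0))
    (i : Fin n) :
    (∀ r : ℕ, 1 ≤ r → r ≤ n →
      μ {ω | R₁ ω = r ∧ P i ω ≤ (r : ℝ) * α / (n : ℝ)} =
        μ {ω | Rminus i ω = r - 1 ∧ P i ω ≤ (r : ℝ) * α / (n : ℝ)}) ∧
    ∑ r ∈ Finset.Icc 1 n, (1 / (r : ℝ)) *
        (μ {ω | R₁ ω = r ∧ P i ω ≤ (r : ℝ) * α / (n : ℝ)}).toReal ≤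
      α / (n : ℝ) := by
  have hpval : ∀ k ω, pval k ω = mirror (fun j => P j ω) k := by
    rintro (j | j) ω
    exacts [congrFun (hpvalT j) ω, hpvalF j ω]
  simp only [hpval] at hR₁ hRminus
  have hRminus' (ω : Ω) : Rminus i ω = stepUpIndex (n - 1) fun m =>
      #{k ∈ univ \ {.inl i, .inr i} | mirror (fun j => P j ω) k ≤ ((m + 1 : ℕ) : ℝ) * α / n} := by
    rw [hRminus, stepUpIndex, Nat.sub_add_cancel i.pos]
  have hevent (r : ℕ) (hr1 : 1 ≤ r) (hrn : r ≤ n) :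
      {ω | R₁ ω = r ∧ P i ω ≤ r * α / n} = {ω | Rminus i ω = r - 1 ∧ P i ω ≤ r * α / n} := by
    ext ω
    refine and_congr_left fun hPi => ?_
    rw [hR₁, hRminus']
    exact stepUpIndex_mirror_eq_iff _ (t := fun j : ℕ => (j : ℝ) * α / n)
      (fun a b hab => by dsimp only; gcongr) i (Fintype.card_fin n).ge hr1 hrn hPi
  let mRest := ⨆ j ∈ ({i}ᶜ : Set (Fin n)), MeasurableSpace.comap (P j) inferInstance
  have hRest : Measurable[mRest] (Rminus i) := by
    rw [funext hRminus']
    exact measurable_stepUpIndex _ fun m =>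
      measurable_card_filter_mirror_sdiff_le i (fun j hj => measurable_biSup_comap P hj) _
  refine ⟨fun r hr1 hrn => by rw [hevent r hr1 hrn], ?_⟩
  rw [sum_congr rfl fun r hr => by rw [hevent r (mem_Icc.1 hr).1 (mem_Icc.1 hr).2]]
  exact sum_one_div_mul_measureReal_le_div
    (hRest.mono (iSup₂_le fun j _ => (hmeas j).comap_le) le_rfl)
    (hA3.indepFun_of_measurable_iSup_compl hmeas i hRest).symm (hA1 i) hα.le hα1.le n

/-- Key FDR computation.  For each true null i and r ∈ {1,…,n}:
Pr_θ(R₁ = r, Pᵢ ≤ rα/n) = Pr_θ(R₁⁽⁻ⁱ⁾ = r − 1, Pᵢ ≤ rα/n), where R₁⁽⁻ⁱ⁾ is the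
number of rejections of the stepup procedure with critical values jα/n,
j = 2,…,n, applied to the 2(n−1) p-values excluding the pair (Pᵢ, 1 − Pᵢ).
Consequently, under independence and A.1,
Σ_{r=1}^n (1/r) Pr_θ(R₁ = r, Pᵢ ≤ rα/n) ≤ α/n. -/
theorem bh_fdr_key_lemma
    {Ω : Type*} [MeasurableSpace Ω] (μ : Measure Ω) [IsProbabilityMeasure μ]
    (n : ℕ) (hn : 1 ≤ n) (α : ℝ) (hα : 0 < α) (hα1 : α < 1)
    (θ : Fin n → ℝ) (P : Fin n → Ω → ℝ)
    (hmeas : ∀ i, Measurable (P i))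
    (hA1 : ∀ i, ∀ p : ℝ, 0 ≤ p → p ≤ 1 →
      μ {ω | P i ω ≤ p} ≤ ENNReal.ofReal p)
    (hA3 : ProbabilityTheory.iIndepFun P μ)
    (pval : (Fin n ⊕ Fin n) → Ω → ℝ)
    (hpvalT : ∀ i, pval (Sum.inl i) = P i)
    (hpvalF : ∀ i ω, pval (Sum.inr i) ω = 1 - P i ω)
    -- the stepup index of the full procedure, which equals the number R₁ of
    -- rejections: R₁ = max{i ≤ n : #{k : p_k ≤ iα/n} ≥ i}
    (R₁ : Ω → ℕ)
    (hR₁ : ∀ ω, R₁ ω = (Finset.range (n + 1)).sup (fun i =>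
      if i ≤ (Finset.univ.filter
          (fun k : Fin n ⊕ Fin n => pval k ω ≤ (i : ℝ) * α / (n : ℝ))).card
        then i else 0))
    -- the reduced stepup procedure dropping the pair (i, n+i), with critical
    -- values (m+1)α/n for m = 1,…,n−1
    (Rminus : Fin n → Ω → ℕ)
    (hRminus : ∀ i ω, Rminus i ω = (Finset.range n).sup (fun m =>
      if m ≤ ((Finset.univ \ {Sum.inl i, Sum.inr i}).filter
          (fun k : Fin n ⊕ Fin n =>
            pval k ω ≤ ((m + 1 : ℕ) : ℝ) * α / (n : ℝ))).card
        then m else 0))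
    (i : Fin n) :
    (∀ r : ℕ, 1 ≤ r → r ≤ n →
      μ {ω | R₁ ω = r ∧ P i ω ≤ (r : ℝ) * α / (n : ℝ)} =
        μ {ω | Rminus i ω = r - 1 ∧ P i ω ≤ (r : ℝ) * α / (n : ℝ)}) ∧
    ∑ r ∈ Finset.Icc 1 n, (1 / (r : ℝ)) *
        (μ {ω | R₁ ω = r ∧ P i ω ≤ (r : ℝ) * α / (n : ℝ)}).toReal ≤
      α / (n : ℝ) :=
  bh_fdr_key_lemma_general μ n α hα hα1 P hmeas hA1 hA3 pval hpvalT hpvalF R₁ hR₁ Rminus hRminus i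
end
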